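/- arXiv:2412.13938 — 5 statements merged into one kernel-verified Lean document; each statement's English description precedes it below -/
import Mathlib

section
/- If x is an endpoint of some optimal partition of the boundary into k* visible intervals, then the greedy sequence x_0 = x, x_{i+1} = G(x_i) satisfies that x_0, x_1, ..., x_{k*-1} is itself an optimal partition. -/
open Set

/-- The closed clockwise arc `[a, b]` on a circularly ordered boundary. -/
def arcCC {α : Type*} [CircularOrder α] (a b : α) : Set α := {x | Btw.btw a x b}

/-- The half-open clockwise arc `(a, b]`. -/
def arcOC {α : Type*} [CircularOrder α] (a b : α) : Set α := {x | Btw.btw a x b ∧ x ≠ a}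

/-- The half-open clockwise arc `[a, b)`. -/
def arcCO {α : Type*} [CircularOrder α] (a b : α) : Set α := {x | Btw.btw a x b ∧ x ≠ b}

/-- Cyclic successor of an index. -/
def nextIdx {k : ℕ} (i : Fin k) : Fin k := ⟨(i.val + 1) % k, Nat.mod_lt _ i.pos⟩

/-- `y 0, …, y (k-1)` partitions the circular boundary into `k` visible intervals:
each consecutive interval is visible and the intervals cover the whole boundary. -/
def IsPartition {α : Type*} [CircularOrder α] (Vis : α → α → Prop) {k : ℕ}
    (y : Fin k → α) : Prop :=
  (∀ i : Fin k, Vis (y i) (y (nextIdx i))) ∧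
    (⋃ i : Fin k, arcCC (y i) (y (nextIdx i))) = Set.univ

/-- An optimal solution: a partition into visible intervals of minimum size. -/
def IsOptimalPartition {α : Type*} [CircularOrder α] (Vis : α → α → Prop) {k : ℕ}
    (y : Fin k → α) : Prop :=
  IsPartition Vis y ∧ ∀ (m : ℕ) (z : Fin m → α), IsPartition Vis z → k ≤ m


section helpers
variable {α : Type*} [CircularOrder α]

private lemma coS {a b c d : α} (h1 : sbtw a b c) (h2 : btw a c d) : btw a b d := by
  by_contra h
  have h3 : sbtw d b a := sbtw_iff_not_btw.2 h
  have h4 : sbtw a d b := sbtw_cyclic_left (sbtw_cyclic_left h3)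
  exact not_btw_of_sbtw (sbtw_trans_right h4 h1) (btw_cyclic_left h2)

private lemma coM {a b c : α} (h : btw a b c) (hbc : b ≠ c) :
    ∀ z, btw b z c → btw a z c := by
  intro z hz
  rcases eq_or_ne z b with rfl | hzb
  · exact h
  rcases eq_or_ne z c with rfl | hzc
  · exact btw_rfl_right
  have hs : sbtw b z c := by
    refine sbtw_of_btw_not_btw hz fun hc => ?_
    rcases hz.antisymm hc with h1 | h1 | h1
    · exact hzb h1.symm
    · exact hzc h1
    · exact hbc h1.symm
  by_contra hq
  have h3 : sbtw c z a := sbtw_iff_not_btw.2 hq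
  have h4 : sbtw c b z := sbtw_cyclic_left (sbtw_cyclic_left hs)
  exact not_btw_of_sbtw (sbtw_trans_right h4 h3) h

private lemma coM' {a b c : α} (h : btw a b c) (hab : a ≠ b) :
    ∀ z, btw a z b → btw a z c := by
  intro z hz
  rcases eq_or_ne z a with rfl | hza
  · exact btw_rfl_left
  rcases eq_or_ne z b with rfl | hzb
  · exact h
  have hs : sbtw a z b := by
    refine sbtw_of_btw_not_btw hz fun hc => ?_
    rcases hz.antisymm hc with h1 | h1 | h1
    · exact hza h1.symm
    · exact hzb h1
    · exact hab h1.symm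
  exact coS hs h

private lemma coW {u b v x : α} (h : btw u b v) : btw x b v ∨ btw u x v := by
  by_contra hq
  push_neg at hq
  obtain ⟨h1, h2⟩ := hq
  have s1 : sbtw v b x := sbtw_iff_not_btw.2 h1
  have s2 : sbtw v x u := sbtw_iff_not_btw.2 h2
  exact not_btw_of_sbtw (sbtw_trans_right s1 s2) h

private lemma coW2 {x b u v : α} (h : btw x b u) : btw x b v ∨ btw u x v := by
  by_contra hq
  push_neg at hq
  obtain ⟨h1, h2⟩ := hq
  have s1 : sbtw v b x := sbtw_iff_not_btw.2 h1
  have s2 : sbtw v x u := sbtw_iff_not_btw.2 h2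
  have s3 : sbtw x v b := sbtw_cyclic_left (sbtw_cyclic_left s1)
  have s4 : sbtw x u v := sbtw_cyclic_left s2
  exact not_btw_of_sbtw (sbtw_trans_right s4 s3) (btw_cyclic_left h)

private lemma coW3 {x a u b : α} (h : btw x a u) (hs : sbtw b u a) : btw x b u := by
  by_contra hq
  have s1 : sbtw u b x := sbtw_iff_not_btw.2 hq
  have s2 : sbtw a b u := sbtw_cyclic_left (sbtw_cyclic_left hs)
  rcases eq_or_ne x a with rfl | hxa
  · exact not_btw_of_sbtw s2 (btw_of_sbtw s1)
  rcases eq_or_ne a u with rfl | hau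
  · exact sbtw_irrefl_right hs
  have hux : u ≠ x := by
    rintro rfl
    exact sbtw_irrefl_left_right s1
  have hsx : sbtw x a u := by
    refine sbtw_of_btw_not_btw h fun hc => ?_
    rcases h.antisymm hc with h1 | h1 | h1
    · exact hxa h1
    · exact hau h1
    · exact hux h1
  exact not_btw_of_sbtw (hsx.trans_left s2) (btw_of_sbtw s1)

private lemma coC {x z v u : α} (h1 : btw x z v) (h2 : btw v z u) :
    z = x ∨ z = v ∨ btw x z u := by
  rcases eq_or_ne z x with rfl | hzx
  · exact Or.inl rfl
  rcases eq_or_ne z v with rfl | hzv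
  · exact Or.inr (Or.inl rfl)
  rcases eq_or_ne v x with rfl | hvx
  · exact Or.inr (Or.inr h2)
  refine Or.inr (Or.inr ?_)
  by_contra hq
  have s0 : sbtw u z x := sbtw_iff_not_btw.2 hq
  have s1 : sbtw x z v := by
    refine sbtw_of_btw_not_btw h1 fun hc => ?_
    rcases h1.antisymm hc with e | e | e
    · exact hzx e.symm
    · exact hzv e
    · exact hvx e
  have s2 : sbtw z v x := sbtw_cyclic_left s1
  have s3 : sbtw z x u := sbtw_cyclic_left s0
  exact not_btw_of_sbtw (sbtw_trans_right s2 s3) (btw_cyclic_left (btw_cyclic_left h2))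

end helpers

/--
If `x` is an endpoint of some optimal partition of the circular boundary
of a non-star-shaped simple polygon into `k*` visible intervals, then the greedy sequence
`xs 0 = x`, `xs (i+1) = G (xs i)` satisfies that `xs 0, xs 1, …, xs (k*-1)` is itself an
optimal partition.
-/
theorem greedy_from_optimal_endpoint_is_optimal {α : Type*} [CircularOrder α]
    (Vis : α → α → Prop) (G : α → α)
    (hMono : ∀ a b c d : α, arcCC a b ⊆ arcCC c d → Vis c d → Vis a b)
    (hVisG : ∀ x : α, Vis x (G x))
    (hGmax : ∀ x y : α, Vis x y → Btw.btw x y (G x))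
    (hGne : ∀ x : α, G x ≠ x)
    {kstar : ℕ} (y : Fin kstar → α) (hy : IsOptimalPartition Vis y)
    (i₀ : Fin kstar) (x : α) (hx : y i₀ = x)
    (xs : ℕ → α) (h0 : xs 0 = x) (hstep : ∀ n : ℕ, xs (n + 1) = G (xs n)) :
    IsOptimalPartition Vis (fun i : Fin kstar => xs i.val) := by
  obtain ⟨⟨hyVis, _hyCov⟩, hyMin⟩ := hy
  have hk : 0 < kstar := i₀.pos
  have hxsVis : ∀ n, Vis (xs n) (xs (n + 1)) := by
    intro n; rw [hstep n]; exact hVisG _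
  have hGmax' : ∀ n (z : α), Vis (xs n) z → btw (xs n) z (xs (n + 1)) := by
    intro n z h; rw [hstep n]; exact hGmax _ _ h
  obtain ⟨yy, hyy⟩ : ∃ yy : ℕ → α,
      ∀ n, yy n = y ⟨(i₀.val + n) % kstar, Nat.mod_lt _ hk⟩ := ⟨_, fun _ => rfl⟩
  have hyy0 : yy 0 = x := by
    rw [hyy 0]
    have : (⟨(i₀.val + 0) % kstar, Nat.mod_lt _ hk⟩ : Fin kstar) = i₀ := by
      ext; simp [Nat.mod_eq_of_lt i₀.isLt]
    rw [this, hx]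
  have hyyVis : ∀ n, Vis (yy n) (yy (n + 1)) := by
    intro n
    have h := hyVis ⟨(i₀.val + n) % kstar, Nat.mod_lt _ hk⟩
    have he : nextIdx (⟨(i₀.val + n) % kstar, Nat.mod_lt _ hk⟩ : Fin kstar)
        = ⟨(i₀.val + (n + 1)) % kstar, Nat.mod_lt _ hk⟩ := by
      ext
      simp [nextIdx, Nat.mod_add_mod, Nat.add_assoc]
    rw [he] at h
    rw [hyy n, hyy (n + 1)]
    exact h
  have hyyk : yy kstar = x := by
    rw [hyy kstar]
    have : (⟨(i₀.val + kstar) % kstar, Nat.mod_lt _ hk⟩ : Fin kstar) = i₀ := by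
      ext; simp [Nat.add_mod_right, Nat.mod_eq_of_lt i₀.isLt]
    rw [this, hx]
  -- prefix coverage of the greedy arcs
  have hQ : ∀ n, ∀ w : α, btw x w (xs (n + 1)) →
      w = x ∨ ∃ j, j ≤ n ∧ btw (xs j) w (xs (j + 1)) := by
    intro n
    induction n with
    | zero =>
      intro w hw
      exact Or.inr ⟨0, le_refl 0, by rwa [h0]⟩
    | succ m ih =>
      intro w hw
      rcases btw_total (xs (m + 1)) w (xs (m + 2)) with hc | hc
      · exact Or.inr ⟨m + 1, le_refl _, hc⟩
      · rcases coC hw hc with rfl | rfl | hb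
        · exact Or.inl rfl
        · exact Or.inr ⟨m + 1, le_refl _, btw_rfl_right⟩
        · rcases ih w hb with h | ⟨j, hj, hbj⟩
          · exact Or.inl h
          · exact Or.inr ⟨j, by omega, hbj⟩
  -- a smaller greedy partition would contradict optimality
  have hSmall : ∀ m : ℕ, 0 < m → m < kstar → Vis (xs (m - 1)) x → False := by
    intro m hm hmk hvis
    have hpart : IsPartition Vis (fun j : Fin m => xs j.val) := by
      constructor
      · intro j
        rcases Nat.lt_or_ge (j.val + 1) m with hj | hj
        · have hni : (nextIdx j).val = j.val + 1 := by
            simp [nextIdx, Nat.mod_eq_of_lt hj]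
          show Vis (xs j.val) (xs (nextIdx j).val)
          rw [hni]; exact hxsVis j.val
        · have hje : j.val = m - 1 := by omega
          have hni : (nextIdx j).val = 0 := by
            have h1 : j.val + 1 = m := by omega
            simp [nextIdx, h1]
          show Vis (xs j.val) (xs (nextIdx j).val)
          rw [hni, h0, hje]; exact hvis
      · apply Set.eq_univ_of_forall
        intro w
        simp only [Set.mem_iUnion]
        have hni : (nextIdx (⟨m - 1, by omega⟩ : Fin m)).val = 0 := by
          simp [nextIdx, show m - 1 + 1 = m by omega]
        rcases btw_total x w (xs (m - 1)) with hc | hc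
        · rcases Nat.lt_or_ge m 2 with h2 | h2
          · have hm1 : m - 1 = 0 := by omega
            refine ⟨⟨m - 1, by omega⟩, ?_⟩
            show btw (xs (m - 1)) w (xs (nextIdx _).val)
            rw [hni, h0, hm1, h0]
            exact btw_rfl_left_right
          · rcases hQ (m - 2) w (by rwa [show m - 2 + 1 = m - 1 by omega]) with rfl | ⟨j, hj, hbj⟩
            · refine ⟨⟨m - 1, by omega⟩, ?_⟩
              show btw (xs (m - 1)) w (xs (nextIdx _).val)
              rw [hni, h0]
              exact btw_rfl_right
            · refine ⟨⟨j, by omega⟩, ?_⟩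
              show btw (xs j) w (xs (nextIdx (⟨j, by omega⟩ : Fin m)).val)
              have : (nextIdx (⟨j, by omega⟩ : Fin m)).val = j + 1 := by
                simp [nextIdx, Nat.mod_eq_of_lt (show j + 1 < m by omega)]
              rw [this]; exact hbj
        · refine ⟨⟨m - 1, by omega⟩, ?_⟩
          show btw (xs (m - 1)) w (xs (nextIdx _).val)
          rw [hni, h0]; exact hc
    exact absurd (hyMin m _ hpart) (by omega)
  -- wrapping past x before the last step is impossible
  have hWrap : ∀ n, n + 1 < kstar → xs n ≠ x → btw (xs n) x (xs (n + 1)) → False := by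
    intro n hn hux hb
    refine hSmall (n + 1) (Nat.succ_pos n) hn ?_
    rw [Nat.add_sub_cancel]
    exact hMono _ _ _ _ (fun z hz => coM' hb hux z hz) (hxsVis n)
  -- greedy dominates the optimal partition points
  have hP : ∀ n, n + 1 ≤ kstar → btw x (yy n) (xs n) := by
    intro n
    induction n with
    | zero =>
      intro _
      rw [hyy0, h0]
      exact btw_rfl
    | succ n ih =>
      intro hn1
      have hp := ih (by omega)
      have hVab := hyyVis n
      by_cases hux : xs n = x
      · rcases Nat.eq_zero_or_pos n with rfl | hpos
        · have hv : Vis (xs 0) (yy 1) := by rw [h0, ← hyy0]; exact hVab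
          have := hGmax' 0 _ hv
          rwa [h0] at this
        · refine (hSmall n hpos (by omega) ?_).elim
          have h1 := hxsVis (n - 1)
          rwa [show n - 1 + 1 = n by omega, hux] at h1
      · by_cases hab : btw (yy n) (xs n) (yy (n + 1))
        · have hubv : btw (xs n) (yy (n + 1)) (xs (n + 1)) := by
            rcases eq_or_ne (xs n) (yy (n + 1)) with he | hne
            · rw [← he]; exact btw_rfl_left
            · exact hGmax' n _ (hMono _ _ _ _ (fun z hz => coM hab hne z hz) hVab)
          rcases coW (x := x) hubv with h | h
          · exact h
          · exact (hWrap n (by omega) hux h).elim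
        · have hs : sbtw (yy (n + 1)) (xs n) (yy n) := sbtw_iff_not_btw.2 hab
          have hxbu : btw x (yy (n + 1)) (xs n) := coW3 hp hs
          rcases coW2 (v := xs (n + 1)) hxbu with h | h
          · exact h
          · exact (hWrap n (by omega) hux h).elim
  refine ⟨⟨?_, ?_⟩, hyMin⟩
  · intro i
    rcases Nat.lt_or_ge (i.val + 1) kstar with hik | hik
    · have hni : (nextIdx i).val = i.val + 1 := by
        simp [nextIdx, Nat.mod_eq_of_lt hik]
      show Vis (xs i.val) (xs (nextIdx i).val)
      rw [hni]; exact hxsVis i.val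
    · have hie : i.val = kstar - 1 := by have := i.isLt; omega
      have hni : (nextIdx i).val = 0 := by
        have h1 : i.val + 1 = kstar := by have := i.isLt; omega
        simp [nextIdx, h1]
      show Vis (xs i.val) (xs (nextIdx i).val)
      rw [hni, h0, hie]
      rcases Nat.lt_or_ge kstar 2 with h2 | h2
      · have hk1 : kstar - 1 = 0 := by omega
        rw [hk1, h0]
        have hni0 : nextIdx i₀ = i₀ := by
          ext
          have : kstar = 1 := by omega
          omega
        have hvx := hyVis i₀
        rwa [hni0, hx] at hvx
      · by_cases hux : xs (kstar - 1) = x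
        · refine ((hSmall (kstar - 1) (by omega) (by omega) ?_)).elim
          rw [show kstar - 1 - 1 = kstar - 2 by omega]
          have h1 := hxsVis (kstar - 2)
          rwa [show kstar - 2 + 1 = kstar - 1 by omega, hux] at h1
        · have hp := hP (kstar - 1) (by omega)
          have hcyc : btw (yy (kstar - 1)) (xs (kstar - 1)) x := btw_cyclic_left hp
          have hVlast : Vis (yy (kstar - 1)) x := by
            have h1 := hyyVis (kstar - 1)
            rwa [show kstar - 1 + 1 = kstar by omega, hyyk] at h1
          exact hMono _ _ _ _ (fun z hz => coM hcyc hux z hz) hVlast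
  · apply Set.eq_univ_of_forall
    intro w
    simp only [Set.mem_iUnion]
    have hni : (nextIdx (⟨kstar - 1, by omega⟩ : Fin kstar)).val = 0 := by
      simp [nextIdx, show kstar - 1 + 1 = kstar by omega]
    rcases btw_total x w (xs (kstar - 1)) with hc | hc
    · rcases Nat.lt_or_ge kstar 2 with h2 | h2
      · refine ⟨⟨kstar - 1, by omega⟩, ?_⟩
        show btw (xs (kstar - 1)) w (xs (nextIdx _).val)
        rw [hni, h0, show kstar - 1 = 0 by omega, h0]
        exact btw_rfl_left_right
      · rcases hQ (kstar - 2) w (by rwa [show kstar - 2 + 1 = kstar - 1 by omega]) with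
          rfl | ⟨j, hj, hbj⟩
        · refine ⟨⟨kstar - 1, by omega⟩, ?_⟩
          show btw (xs (kstar - 1)) w (xs (nextIdx _).val)
          rw [hni, h0]
          exact btw_rfl_right
        · refine ⟨⟨j, by omega⟩, ?_⟩
          show btw (xs j) w (xs (nextIdx (⟨j, by omega⟩ : Fin kstar)).val)
          have : (nextIdx (⟨j, by omega⟩ : Fin kstar)).val = j + 1 := by
            simp [nextIdx, Nat.mod_eq_of_lt (show j + 1 < kstar by omega)]
          rw [this]; exact hbj
    · refine ⟨⟨kstar - 1, by omega⟩, ?_⟩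
      show btw (xs (kstar - 1)) w (xs (nextIdx _).val)
      rw [hni, h0]; exact hc
end

section
/- If some window x_i, x_{i+1}, ..., x_{i+k*-1} of the greedy sequence forms an optimal partition, then for every j ≥ 0 the shifted window x_{i+j}, ..., x_{i+k*-1+j} is also an optimal partition. -/
open Set

section CircAux
variable {α : Type*} [CircularOrder α]

theorem sbtw_triple' {a b m x : α}
    (h1 : sbtw a x b) (h2 : sbtw b x m) (h3 : sbtw m x a) : False :=
  sbtw_asymm h1 ((h3.cyclic_left.cyclic_left.trans_left h2.cyclic_left.cyclic_left).cyclic_left)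

theorem btw_suffix' {a b c x : α} (h1 : btw a b c) (h2 : btw b x c) (hbc : b ≠ c) :
    btw a x c := by
  by_cases h : btw c x b
  · rcases btw_antisymm h2 h with h' | h' | h'
    · rw [← h']; exact h1
    · rw [h']; exact btw_rfl_right
    · exact absurd h'.symm hbc
  · have hs : sbtw b x c := sbtw_iff_not_btw.2 h
    by_contra hax
    have hxa : sbtw c x a := sbtw_iff_not_btw.2 hax
    exact h1.not_sbtw ((hs.cyclic_left.cyclic_left).trans_right hxa)

theorem btw_prefix' {a b c x : α} (h1 : btw a b c) (h2 : btw a x b) (hab : a ≠ b) :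
    btw a x c :=
  btw_cyclic_right (btw_suffix' h2.cyclic_left h1.cyclic_left (Ne.symm hab))

theorem btw_split' {a b : α} (m : α) {x : α} (h2 : btw a x b) :
    btw a x m ∨ btw m x b := by
  by_contra h
  push_neg at h
  obtain ⟨hxm, hxb⟩ := h
  have s1 : sbtw m x a := sbtw_iff_not_btw.2 hxm
  have s2 : sbtw b x m := sbtw_iff_not_btw.2 hxb
  by_cases hs : sbtw a x b
  · exact sbtw_triple' hs s2 s1
  · have hba : btw b x a := by
      by_contra hb
      exact hs (sbtw_iff_not_btw.2 hb)
    rcases btw_antisymm h2 hba with h' | h' | h'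
    · rw [← h'] at s1; exact sbtw_irrefl_right s1
    · rw [h'] at s2; exact sbtw_irrefl_left s2
    · rw [h'] at s2; exact sbtw_asymm s2 s1

theorem mem_arcCC' {a b x : α} (h : btw a x b) : x ∈ arcCC a b := h

end CircAux

theorem nextIdx_val_last {k : ℕ} (t : Fin k) (h : t.val + 1 = k) : (nextIdx t).val = 0 := by
  show (t.val + 1) % k = 0
  rw [h, Nat.mod_self]

theorem nextIdx_val_lt {k : ℕ} (t : Fin k) (h : t.val + 1 < k) :
    (nextIdx t).val = t.val + 1 :=
  Nat.mod_eq_of_lt h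

set_option linter.unusedVariables false in
/-- One-step version: if the greedy window starting at `n` is an optimal partition,
so is the greedy window starting at `n + 1`. -/
theorem step_lemma {α : Type*} [CircularOrder α]
    (Vis : α → α → Prop) (G : α → α)
    (hMono : ∀ a b c d : α, arcCC a b ⊆ arcCC c d → Vis c d → Vis a b)
    (hVisG : ∀ x : α, Vis x (G x))
    (hGmax : ∀ x y : α, Vis x y → Btw.btw x y (G x))
    (hGne : ∀ x : α, G x ≠ x)
    (xs : ℕ → α) (hstep : ∀ n : ℕ, xs (n + 1) = G (xs n))
    {k : ℕ} (n : ℕ)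
    (hopt : IsOptimalPartition Vis (fun t : Fin k => xs (n + t.val))) :
    IsOptimalPartition Vis (fun t : Fin k => xs (n + 1 + t.val)) := by
  obtain ⟨⟨hvis, hcov⟩, hmin⟩ := hopt
  rcases Nat.eq_zero_or_pos k with hk0 | hk
  · -- k = 0 : the type α is empty
    subst hk0
    have hemp : (Set.univ : Set α) = ∅ := by
      rw [← hcov]; exact Set.iUnion_of_empty _
    refine ⟨⟨fun t => t.elim0, ?_⟩, hmin⟩
    rw [Set.iUnion_of_empty]; exact hemp.symm
  -- basic points and facts
  have hlastlt : k - 1 < k := by omega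
  have hwrap : Vis (xs (n + (k - 1))) (xs n) := by
    have h : Vis (xs (n + (k - 1)))
        (xs (n + (nextIdx (⟨k - 1, hlastlt⟩ : Fin k)).val)) := hvis ⟨k - 1, hlastlt⟩
    rw [nextIdx_val_last (⟨k - 1, hlastlt⟩ : Fin k) (by show k - 1 + 1 = k; omega)] at h
    exact h
  have hgstep : xs (n + k) = G (xs (n + (k - 1))) := by
    have h := hstep (n + (k - 1))
    rw [show n + (k - 1) + 1 = n + k by omega] at h
    exact h
  have H1 : btw (xs (n + (k - 1))) (xs n) (xs (n + k)) := by
    have h := hGmax _ _ hwrap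
    rw [← hgstep] at h
    exact h
  have hVisag : Vis (xs (n + (k - 1))) (xs (n + k)) := by
    rw [hgstep]; exact hVisG _
  rcases Nat.lt_or_ge k 2 with hk1 | hk2
  · -- k = 1
    have hk1' : k = 1 := by omega
    subst hk1'
    have hbb : Vis (xs n) (xs n) := hwrap
    refine ⟨⟨?_, ?_⟩, hmin⟩
    · intro t
      have ht : t = ⟨0, Nat.one_pos⟩ := by
        apply Fin.ext; omega
      subst ht
      show Vis (xs (n + 1 + 0)) (xs (n + 1 + (nextIdx (⟨0, Nat.one_pos⟩ : Fin 1)).val))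
      rw [nextIdx_val_last (⟨0, Nat.one_pos⟩ : Fin 1) rfl]
      exact hMono _ _ _ _ (fun x _ => mem_arcCC' btw_rfl_left_right) hbb
    · apply Set.eq_univ_of_forall
      intro x
      exact Set.mem_iUnion.2 ⟨⟨0, Nat.one_pos⟩, mem_arcCC' (btw_refl_left_right _ x)⟩
  -- now k ≥ 2
  have honept : ∀ u : α, Vis u u → False := by
    intro u hu
    have hpart1 : IsPartition Vis (fun _ : Fin 1 => u) := by
      refine ⟨fun t => hu, ?_⟩
      apply Set.eq_univ_of_forall
      intro x
      exact Set.mem_iUnion.2 ⟨⟨0, Nat.one_pos⟩, mem_arcCC' (btw_refl_left_right u x)⟩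
    have := hmin 1 _ hpart1
    omega
  have hVisUniv : ∀ u v : α, Vis u v → arcCC u v = Set.univ → False := by
    intro u v huv harc
    exact honept u (hMono u u u v (by rw [harc]; exact Set.subset_univ _) huv)
  have arcCC_self : ∀ u : α, arcCC u u = (Set.univ : Set α) := by
    intro u
    apply Set.eq_univ_of_forall
    intro x
    exact mem_arcCC' (btw_refl_left_right u x)
  have hne_ab : xs (n + (k - 1)) ≠ xs n := by
    intro h
    exact hVisUniv _ _ hwrap (by rw [h]; exact arcCC_self _)
  have hvis0 : Vis (xs n) (xs (n + 1)) := by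
    have h : Vis (xs (n + 0)) (xs (n + (nextIdx (⟨0, hk⟩ : Fin k)).val)) := hvis ⟨0, hk⟩
    rw [nextIdx_val_lt (⟨0, hk⟩ : Fin k) (by show 0 + 1 < k; omega)] at h
    exact h
  have hne_bc : xs n ≠ xs (n + 1) := by
    intro h
    exact hVisUniv _ _ hvis0 (by rw [← h]; exact arcCC_self _)
  -- the contradiction machine: if btw a b c and Vis a c, a (k-1)-partition exists
  have hcontra : btw (xs (n + (k - 1))) (xs n) (xs (n + 1)) →
      Vis (xs (n + (k - 1))) (xs (n + 1)) → False := by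
    intro habc hvac
    have hpart : IsPartition Vis (fun t : Fin (k - 1) => xs (n + 1 + t.val)) := by
      constructor
      · intro t
        show Vis (xs (n + 1 + t.val)) (xs (n + 1 + (nextIdx t).val))
        by_cases ht : t.val + 1 = k - 1
        · rw [nextIdx_val_last t ht, show n + 1 + t.val = n + (k - 1) by omega]
          exact hvac
        · rw [nextIdx_val_lt t (by have := t.isLt; omega),
            show n + 1 + (t.val + 1) = n + 1 + t.val + 1 by omega, hstep]
          exact hVisG _
      · apply Set.eq_univ_of_forall
        intro x
        have hx : x ∈ ⋃ s : Fin k,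
            arcCC ((fun t : Fin k => xs (n + t.val)) s)
              ((fun t : Fin k => xs (n + t.val)) (nextIdx s)) := by
          rw [hcov]; trivial
        obtain ⟨s, hsx0⟩ := Set.mem_iUnion.1 hx
        have hsx : x ∈ arcCC (xs (n + s.val)) (xs (n + (nextIdx s).val)) := hsx0
        by_cases hs1 : s.val + 1 = k
        · -- old wrap arc [a, b]
          rw [nextIdx_val_last s hs1, show s.val = k - 1 by omega] at hsx
          have hax : btw (xs (n + (k - 1))) x (xs n) := hsx
          refine Set.mem_iUnion.2 ⟨⟨k - 2, by omega⟩, ?_⟩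
          show x ∈ arcCC (xs (n + 1 + (k - 2)))
            (xs (n + 1 + (nextIdx (⟨k - 2, by omega⟩ : Fin (k - 1))).val))
          rw [nextIdx_val_last (⟨k - 2, by omega⟩ : Fin (k - 1))
            (by show k - 2 + 1 = k - 1; omega)]
          show btw (xs (n + 1 + (k - 2))) x (xs (n + 1 + 0))
          rw [show n + 1 + (k - 2) = n + (k - 1) by omega]
          exact btw_prefix' habc hax hne_ab
        · rw [nextIdx_val_lt s (by have := s.isLt; omega)] at hsx
          by_cases hs0 : s.val = 0
          · -- old arc [b, c]
            rw [hs0] at hsx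
            have hbx : btw (xs n) x (xs (n + 1)) := hsx
            refine Set.mem_iUnion.2 ⟨⟨k - 2, by omega⟩, ?_⟩
            show x ∈ arcCC (xs (n + 1 + (k - 2)))
              (xs (n + 1 + (nextIdx (⟨k - 2, by omega⟩ : Fin (k - 1))).val))
            rw [nextIdx_val_last (⟨k - 2, by omega⟩ : Fin (k - 1))
              (by show k - 2 + 1 = k - 1; omega)]
            show btw (xs (n + 1 + (k - 2))) x (xs (n + 1 + 0))
            rw [show n + 1 + (k - 2) = n + (k - 1) by omega]
            exact btw_suffix' habc hbx hne_bc
          · -- middle arcs, reused verbatim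
            refine Set.mem_iUnion.2 ⟨⟨s.val - 1, by omega⟩, ?_⟩
            show x ∈ arcCC (xs (n + 1 + (s.val - 1)))
              (xs (n + 1 + (nextIdx (⟨s.val - 1, by omega⟩ : Fin (k - 1))).val))
            rw [nextIdx_val_lt (⟨s.val - 1, by omega⟩ : Fin (k - 1))
              (by show s.val - 1 + 1 < k - 1; omega)]
            show btw (xs (n + 1 + (s.val - 1))) x (xs (n + 1 + (s.val - 1 + 1)))
            rw [show n + 1 + (s.val - 1) = n + s.val by omega,
              show n + 1 + (s.val - 1 + 1) = n + (s.val + 1) by omega]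
            exact hsx
    have := hmin (k - 1) _ hpart
    omega
  -- main case split on the position of g = xs (n + k)
  by_cases hA : btw (xs n) (xs (n + k)) (xs (n + 1))
  · -- Case A : g lies in [b, c]
    by_cases hgc : xs (n + k) = xs (n + 1)
    · -- degenerate g = c : contradiction with optimality
      exact absurd (hcontra (by rw [← hgc]; exact H1) (by rw [← hgc]; exact hVisag)) not_false
    · -- main subcase: build the shifted k-partition
      refine ⟨⟨?_, ?_⟩, hmin⟩
      · intro t
        show Vis (xs (n + 1 + t.val)) (xs (n + 1 + (nextIdx t).val))
        by_cases ht : t.val + 1 = k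
        · rw [nextIdx_val_last t ht, show n + 1 + t.val = n + k by omega]
          exact hMono _ _ _ _ (fun x hx => mem_arcCC' (btw_suffix' hA hx hgc)) hvis0
        · rw [nextIdx_val_lt t (by have := t.isLt; omega),
            show n + 1 + (t.val + 1) = n + 1 + t.val + 1 by omega, hstep]
          exact hVisG _
      · apply Set.eq_univ_of_forall
        intro x
        have hx : x ∈ ⋃ s : Fin k,
            arcCC ((fun t : Fin k => xs (n + t.val)) s)
              ((fun t : Fin k => xs (n + t.val)) (nextIdx s)) := by
          rw [hcov]; trivial
        obtain ⟨s, hsx0⟩ := Set.mem_iUnion.1 hx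
        have hsx : x ∈ arcCC (xs (n + s.val)) (xs (n + (nextIdx s).val)) := hsx0
        by_cases hs1 : s.val + 1 = k
        · -- old wrap arc [a,b]  →  new arc [a, g] (index k-2)
          rw [nextIdx_val_last s hs1, show s.val = k - 1 by omega] at hsx
          have hax : btw (xs (n + (k - 1))) x (xs n) := hsx
          refine Set.mem_iUnion.2 ⟨⟨k - 2, by omega⟩, ?_⟩
          show x ∈ arcCC (xs (n + 1 + (k - 2)))
            (xs (n + 1 + (nextIdx (⟨k - 2, by omega⟩ : Fin k)).val))
          rw [nextIdx_val_lt (⟨k - 2, by omega⟩ : Fin k) (by show k - 2 + 1 < k; omega)]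
          show btw (xs (n + 1 + (k - 2))) x (xs (n + 1 + (k - 2 + 1)))
          rw [show n + 1 + (k - 2) = n + (k - 1) by omega,
            show n + 1 + (k - 2 + 1) = n + k by omega]
          exact btw_prefix' H1 hax hne_ab
        · rw [nextIdx_val_lt s (by have := s.isLt; omega)] at hsx
          by_cases hs0 : s.val = 0
          · -- old arc [b,c] : split at g
            rw [hs0] at hsx
            have hbx : btw (xs n) x (xs (n + 1)) := hsx
            by_cases hbg : xs n = xs (n + k)
            · -- b = g : whole [b,c] is the new wrap arc [g,c]
              refine Set.mem_iUnion.2 ⟨⟨k - 1, hlastlt⟩, ?_⟩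
              show x ∈ arcCC (xs (n + 1 + (k - 1)))
                (xs (n + 1 + (nextIdx (⟨k - 1, hlastlt⟩ : Fin k)).val))
              rw [nextIdx_val_last (⟨k - 1, hlastlt⟩ : Fin k) (by show k - 1 + 1 = k; omega)]
              show btw (xs (n + 1 + (k - 1))) x (xs (n + 1 + 0))
              rw [show n + 1 + (k - 1) = n + k by omega, ← hbg]
              exact hbx
            · rcases btw_split' (xs (n + k)) hbx with h | h
              · -- btw b x g : x ∈ [a, g]
                refine Set.mem_iUnion.2 ⟨⟨k - 2, by omega⟩, ?_⟩
                show x ∈ arcCC (xs (n + 1 + (k - 2)))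
                  (xs (n + 1 + (nextIdx (⟨k - 2, by omega⟩ : Fin k)).val))
                rw [nextIdx_val_lt (⟨k - 2, by omega⟩ : Fin k) (by show k - 2 + 1 < k; omega)]
                show btw (xs (n + 1 + (k - 2))) x (xs (n + 1 + (k - 2 + 1)))
                rw [show n + 1 + (k - 2) = n + (k - 1) by omega,
                  show n + 1 + (k - 2 + 1) = n + k by omega]
                exact btw_suffix' H1 h hbg
              · -- btw g x c : new wrap arc
                refine Set.mem_iUnion.2 ⟨⟨k - 1, hlastlt⟩, ?_⟩
                show x ∈ arcCC (xs (n + 1 + (k - 1)))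
                  (xs (n + 1 + (nextIdx (⟨k - 1, hlastlt⟩ : Fin k)).val))
                rw [nextIdx_val_last (⟨k - 1, hlastlt⟩ : Fin k) (by show k - 1 + 1 = k; omega)]
                show btw (xs (n + 1 + (k - 1))) x (xs (n + 1 + 0))
                rw [show n + 1 + (k - 1) = n + k by omega]
                exact h
          · -- middle arcs reused
            refine Set.mem_iUnion.2 ⟨⟨s.val - 1, by omega⟩, ?_⟩
            show x ∈ arcCC (xs (n + 1 + (s.val - 1)))
              (xs (n + 1 + (nextIdx (⟨s.val - 1, by omega⟩ : Fin k)).val))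
            rw [nextIdx_val_lt (⟨s.val - 1, by omega⟩ : Fin k)
              (by show s.val - 1 + 1 < k; have := s.isLt; omega)]
            show btw (xs (n + 1 + (s.val - 1))) x (xs (n + 1 + (s.val - 1 + 1)))
            rw [show n + 1 + (s.val - 1) = n + s.val by omega,
              show n + 1 + (s.val - 1 + 1) = n + (s.val + 1) by omega]
            exact hsx
  · -- Case B : g strictly beyond c — contradiction with optimality
    exfalso
    have hB : sbtw (xs (n + 1)) (xs (n + k)) (xs n) := sbtw_iff_not_btw.2 hA
    have hcg : xs (n + 1) ≠ xs (n + k) := by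
      intro h; rw [h] at hB; exact sbtw_irrefl_left hB
    have hgb : xs (n + k) ≠ xs n := by
      intro h; rw [h] at hB; exact sbtw_irrefl_right hB
    have hcb : xs (n + 1) ≠ xs n := by
      intro h; rw [h] at hB; exact sbtw_irrefl_left_right hB
    by_cases hac : xs (n + (k - 1)) = xs (n + 1)
    · -- a = c : immediate contradiction
      rw [← hac] at hB
      exact H1.not_sbtw hB.cyclic_left
    · have hbcg : btw (xs n) (xs (n + 1)) (xs (n + k)) := hB.btw.cyclic_left.cyclic_left
      have hacg : btw (xs (n + (k - 1))) (xs (n + 1)) (xs (n + k)) :=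
        btw_suffix' H1 hbcg (Ne.symm hgb)
      have habc : btw (xs (n + (k - 1))) (xs n) (xs (n + 1)) := by
        rcases btw_split' (xs (n + 1)) H1 with h | h
        · exact h
        · rcases btw_antisymm h hB.btw.cyclic_left with h' | h' | h'
          · exact absurd h' hcb
          · exact absurd h'.symm hgb
          · exact absurd h'.symm hcg
      have hvac : Vis (xs (n + (k - 1))) (xs (n + 1)) :=
        hMono _ _ _ _ (fun x hx => mem_arcCC' (btw_prefix' hacg hx hac)) hVisag
      exact hcontra habc hvac

/--
"Once optimal, always optimal": for a greedy sequence `xs` on the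
circular boundary of a non-star-shaped simple polygon, if some window
`xs i, xs (i+1), …, xs (i+k*-1)` forms an optimal partition into `k*` visible intervals,
then for every `j ≥ 0` the shifted window `xs (i+j), …, xs (i+k*-1+j)` is also an
optimal partition.
-/
theorem once_optimal_always_optimal {α : Type*} [CircularOrder α]
    (Vis : α → α → Prop) (G : α → α)
    (hMono : ∀ a b c d : α, arcCC a b ⊆ arcCC c d → Vis c d → Vis a b)
    (hVisG : ∀ x : α, Vis x (G x))
    (hGmax : ∀ x y : α, Vis x y → Btw.btw x y (G x))
    (hGne : ∀ x : α, G x ≠ x)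
    (xs : ℕ → α) (hstep : ∀ n : ℕ, xs (n + 1) = G (xs n))
    {kstar : ℕ} (i : ℕ)
    (hopt : IsOptimalPartition Vis (fun t : Fin kstar => xs (i + t.val))) :
    ∀ j : ℕ, IsOptimalPartition Vis (fun t : Fin kstar => xs (i + j + t.val)) := by
  intro j
  induction j with
  | zero => exact hopt
  | succ j ih =>
    exact step_lemma Vis G hMono hVisG hGmax hGne xs hstep (i + j) ih
end

section
/- Let (x_i) be a greedy sequence none of whose points is an endpoint of an optimal solution, let y_0,...,y_{k*-1} be an optimal solution with y_0 ∈ (x_0, x_1], and let k be the number of greedy steps in the first revolution. Then for all m ∈ {1,...,k} and i ≥ 1, the point x_{ik+m} lies in the arc [y_{m-1}, x_{(i-1)k+m}). -/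
open Set

section AuxKit

theorem modSucc' {k : ℕ} (a : ℕ) : (a + 1) % k = (a % k + 1) % k :=
  (Nat.mod_add_mod a k 1).symm

theorem modNeSucc' {k : ℕ} (hk : 2 ≤ k) (a : ℕ) : a % k ≠ (a + 1) % k := by
  have h1 : a % k < k := Nat.mod_lt _ (by omega)
  by_cases h : a % k + 1 < k
  · rw [modSucc' a, Nat.mod_eq_of_lt h]; omega
  · have h2 : a % k + 1 = k := by omega
    rw [modSucc' a, h2, Nat.mod_self]; omega

theorem modSuccCongr' {k : ℕ} {a b : ℕ} (h : a % k = b % k) : (a+1) % k = (b+1) % k := by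
  rw [modSucc' a, h, ← modSucc' b]

theorem modPredCongr' {k : ℕ} (hk : 0 < k) {a b : ℕ} (h : (a+1) % k = (b+1) % k) :
    a % k = b % k := by
  have e : ∀ c : ℕ, c % k = ((c+1) % k + (k-1)) % k := by
    intro c
    rw [Nat.mod_add_mod]
    have : c + 1 + (k-1) = c + k := by omega
    rw [this, Nat.add_mod_right]
  rw [e a, h, ← e b]

theorem modChar' {k A B : ℕ} (hA : A < k) (hB : B < k) :
    (B ≤ A ∧ (A + k - B) % k = A - B) ∨ (A < B ∧ (A + k - B) % k = A + k - B) := by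
  by_cases h : B ≤ A
  · left
    refine ⟨h, ?_⟩
    have h1 : k ≤ A + k - B := by omega
    rw [Nat.mod_eq_sub_mod h1]
    have h2 : A + k - B - k = A - B := by omega
    rw [h2, Nat.mod_eq_of_lt (by omega)]
  · right
    exact ⟨by omega, Nat.mod_eq_of_lt (by omega)⟩

variable {α : Type*} [CircularOrder α]

theorem btw_self' (a b : α) : btw a b a := btw_refl_left_right a b

theorem btw_total'' (o a b : α) : btw o a b ∨ btw o b a := by
  rcases btw_total o a b with h | h
  · exact Or.inl h
  · exact Or.inr h.cyclic_left.cyclic_left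

/-- From `x ∈ [a,b]` (with `x ≠ b`) and `p ∈ [x,b]`, conclude `p ∈ [a,b]`. -/
theorem lt1 {a x b p : α} (h1 : btw a x b) (h2 : btw x p b) (hxb : x ≠ b) : btw a p b := by
  by_cases hpb : p = b
  · subst hpb; exact btw_rfl_right
  by_cases hpx : p = x
  · subst hpx; exact h1
  by_cases hax : a = x
  · subst hax; exact h2
  by_cases hab : a = b
  · subst hab; exact btw_self' a p
  have s1 : sbtw a x b := sbtw_of_btw_not_btw h1 (fun hc => by
    rcases h1.antisymm hc with h | h | h
    · exact hax h
    · exact hxb h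
    · exact hab h.symm)
  have s2 : sbtw x p b := sbtw_of_btw_not_btw h2 (fun hc => by
    rcases h2.antisymm hc with h | h | h
    · exact hpx h.symm
    · exact hpb h
    · exact hxb h.symm)
  exact (s1.trans_left s2).btw

/-- From `p ∈ [a,x]` and `x ∈ [a,b]` (with `x ≠ a`), conclude `p ∈ [a,b]`. -/
theorem lt2 {a p x b : α} (h1 : btw a p x) (h2 : btw a x b) (hxa : x ≠ a) : btw a p b := by
  by_cases hpa : p = a
  · subst hpa; exact btw_rfl_left
  by_cases hpx : p = x
  · subst hpx; exact h2
  by_cases hpb : p = b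
  · subst hpb; exact btw_rfl_right
  by_cases hab : a = b
  · subst hab; exact btw_self' a p
  by_cases hxb : x = b
  · subst hxb; exact h1
  have s1 : sbtw a p x := sbtw_of_btw_not_btw h1 (fun hc => by
    rcases h1.antisymm hc with h | h | h
    · exact hpa h.symm
    · exact hpx h
    · exact hxa h)
  have s2 : sbtw a x b := sbtw_of_btw_not_btw h2 (fun hc => by
    rcases h2.antisymm hc with h | h | h
    · exact hxa h.symm
    · exact hxb h
    · exact hab h.symm)
  exact (s1.trans_right s2).btw

/-- From `a ≤ b` and `b ≤ c` seen from `o` (with `b ≠ o`), conclude `b ∈ [a,c]`. -/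
theorem lt3 {o a b c : α} (h1 : btw o a b) (h2 : btw o b c) (hbo : b ≠ o) : btw a b c := by
  by_cases hab : a = b
  · subst hab; exact btw_rfl_left
  by_cases hbc : b = c
  · subst hbc; exact btw_rfl_right
  by_cases hac : a = c
  · subst hac; exact btw_self' a b
  by_cases hao : a = o
  · subst hao; exact h2
  by_cases hco : c = o
  · subst hco; exact h1.cyclic_left
  have s1 : sbtw o a b := sbtw_of_btw_not_btw h1 (fun hc => by
    rcases h1.antisymm hc with h | h | h
    · exact hao h.symm
    · exact hab h
    · exact hbo h)
  have s2 : sbtw o b c := sbtw_of_btw_not_btw h2 (fun hc => by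
    rcases h2.antisymm hc with h | h | h
    · exact hbo h.symm
    · exact hbc h
    · exact hco h)
  by_contra hcon
  have s3 : sbtw c b a := sbtw_iff_not_btw.2 hcon
  have B1 : sbtw a c b := sbtw_cyclic_left (sbtw_cyclic_left s3)
  have B2 : sbtw c o b := sbtw_cyclic_left (sbtw_cyclic_left s2)
  have B3 : sbtw a o b := B1.trans_left B2
  exact (sbtw_asymm (sbtw_cyclic_left (sbtw_cyclic_left s1))) B3

theorem coverAuto' {s : ℕ} (z : Fin s → α) (hs : 0 < s) :
    (⋃ i, arcCC (z i) (z (nextIdx i))) = Set.univ := by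
  ext p
  simp only [mem_iUnion, mem_univ, iff_true]
  by_contra hcon
  push_neg at hcon
  have hstep' : ∀ i : Fin s, sbtw p (z i) (z (nextIdx i)) := by
    intro i
    exact sbtw_iff_not_btw.2 (fun hb => hcon i hb.cyclic_left)
  rcases Nat.lt_or_ge 1 s with hs2 | hs1
  · have chain : ∀ t, (ht : t < s) → 0 < t → sbtw p (z ⟨0, hs⟩) (z ⟨t, ht⟩) := by
      intro t
      induction t with
      | zero => omega
      | succ t ih =>
        intro ht _
        have hnx : nextIdx (⟨t, by omega⟩ : Fin s) = ⟨t+1, ht⟩ := by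
          simp only [nextIdx]
          congr 1
          exact Nat.mod_eq_of_lt ht
        have h2 : sbtw p (z ⟨t, by omega⟩) (z ⟨t+1, ht⟩) := by
          have := hstep' ⟨t, by omega⟩
          rwa [hnx] at this
        rcases Nat.eq_zero_or_pos t with h0 | hpos
        · subst h0; exact h2
        · exact (ih (by omega) hpos).trans_right h2
    have hlast := chain (s-1) (by omega) (by omega)
    have hnx : nextIdx (⟨s-1, by omega⟩ : Fin s) = ⟨0, hs⟩ := by
      simp only [nextIdx]
      congr 1
      have e : s - 1 + 1 = s := by omega
      rw [e, Nat.mod_self]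
    have h2 : sbtw p (z ⟨s-1, by omega⟩) (z ⟨0, hs⟩) := by
      have := hstep' ⟨s-1, by omega⟩
      rwa [hnx] at this
    exact (sbtw_asymm h2) (sbtw_cyclic_left hlast)
  · have hs1' : s = 1 := by omega
    subst hs1'
    have h := hstep' ⟨0, hs⟩
    have hnx : nextIdx (⟨0, hs⟩ : Fin 1) = ⟨0, hs⟩ := by
      simp only [nextIdx]
    rw [hnx] at h
    exact sbtw_irrefl_right h

end AuxKit

/--
Behavior of non-optimal greedy sequences.  Let `xs` be a greedy
sequence on the circular boundary of a non-star-shaped simple polygon, none of whose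
points is an endpoint of an optimal solution; let `y 0, …, y (k*-1)` be an optimal
partition with `y 0 ∈ (xs 0, xs 1]`, and let `k` be the number of greedy steps in the
first revolution (minimal with `xs (k+1) ∈ [xs 0, xs 1)`).  Then for all `m ∈ {1,…,k}`
and `i ≥ 1`, the point `xs (i·k + m)` lies in the clockwise arc
`[y ((m-1) mod k*), xs ((i-1)·k + m))`.
-/
theorem nonoptimal_greedy_behavior {α : Type*} [CircularOrder α]
    (Vis : α → α → Prop) (G : α → α)
    (hMono : ∀ a b c d : α, arcCC a b ⊆ arcCC c d → Vis c d → Vis a b)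
    (hVisG : ∀ x : α, Vis x (G x))
    (hGmax : ∀ x y : α, Vis x y → Btw.btw x y (G x))
    (hGne : ∀ x : α, G x ≠ x)
    (xs : ℕ → α) (hstep : ∀ n : ℕ, xs (n + 1) = G (xs n))
    (hnonopt : ∀ (n : ℕ) (kk : ℕ) (z : Fin kk → α),
      IsOptimalPartition Vis z → ∀ j : Fin kk, z j ≠ xs n)
    {kstar : ℕ} (hkstar : 0 < kstar)
    (y : Fin kstar → α) (hy : IsOptimalPartition Vis y)
    (hy0 : y ⟨0, hkstar⟩ ∈ arcOC (xs 0) (xs 1))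
    (k : ℕ) (hk : xs (k + 1) ∈ arcCO (xs 0) (xs 1))
    (hkmin : ∀ j : ℕ, xs (j + 1) ∈ arcCO (xs 0) (xs 1) → k ≤ j) :
    ∀ m : ℕ, 1 ≤ m → m ≤ k → ∀ i : ℕ, 1 ≤ i →
      xs (i * k + m) ∈
        arcCO (y ⟨(m - 1) % kstar, Nat.mod_lt _ hkstar⟩) (xs ((i - 1) * k + m)) := by
  -- ## Setup
  have memArc : ∀ {a b p : α}, p ∈ arcCC a b ↔ btw a p b := Iff.rfl
  obtain ⟨Y, hYdef⟩ : ∃ Y : ℕ → α, ∀ j, Y j = y ⟨j % kstar, Nat.mod_lt _ hkstar⟩ :=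
    ⟨_, fun _ => rfl⟩
  have hYeq : ∀ {j j' : ℕ}, j % kstar = j' % kstar → Y j = Y j' := by
    intro j j' h
    rw [hYdef, hYdef]
    congr 1
    exact Fin.ext h
  have hYper : ∀ j, Y (j + kstar) = Y j := fun j => hYeq (Nat.add_mod_right j kstar)
  have hne : ∀ j n : ℕ, Y j ≠ xs n := by
    intro j n
    rw [hYdef]
    exact hnonopt n kstar y hy _
  have hVisY : ∀ j, Vis (Y j) (Y (j + 1)) := by
    intro j
    have h := hy.1.1 ⟨j % kstar, Nat.mod_lt _ hkstar⟩
    have hnx : nextIdx (⟨j % kstar, Nat.mod_lt _ hkstar⟩ : Fin kstar)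
        = ⟨(j+1) % kstar, Nat.mod_lt _ hkstar⟩ := by
      simp only [nextIdx]
      congr 1
      exact (modSucc' j).symm
    rw [hnx] at h
    rw [hYdef, hYdef]
    exact h
  have hcov : ∀ p : α, ∃ J : ℕ, J < kstar ∧ btw (Y J) p (Y (J+1)) := by
    intro p
    have hmem : p ∈ ⋃ i, arcCC (y i) (y (nextIdx i)) := by rw [hy.1.2]; trivial
    obtain ⟨i, hi⟩ := mem_iUnion.1 hmem
    refine ⟨i.val, i.isLt, ?_⟩
    have e1 : Y i.val = y i := by
      rw [hYdef]; congr 1; exact Fin.ext (Nat.mod_eq_of_lt i.isLt)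
    have e2 : Y (i.val + 1) = y (nextIdx i) := by
      rw [hYdef]; congr 1
    rw [e1, e2]
    exact hi
  -- ## Cycle contradictions
  have smallCycleFalse : ∀ (s : ℕ) (z : Fin s → α), 0 < s → s < kstar →
      (∀ i, Vis (z i) (z (nextIdx i))) → False := by
    intro s z hs hsk hv
    exact absurd (hy.2 s z ⟨hv, coverAuto' z hs⟩) (by omega)
  have fullCycleFalse : ∀ (n s : ℕ) (z : Fin s → α) (hs : 0 < s), s ≤ kstar →
      (∀ i, Vis (z i) (z (nextIdx i))) → z ⟨0, hs⟩ = xs n → False := by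
    intro n s z hs hsk hv hz0
    rcases Nat.lt_or_ge s kstar with h | h
    · exact smallCycleFalse s z hs h hv
    · have hseq : s = kstar := by omega
      subst hseq
      exact hnonopt n s z ⟨⟨hv, coverAuto' z hs⟩, fun m z' hp => hy.2 m z' hp⟩ ⟨0, hs⟩ hz0
  have cycleFalse : ∀ (n s : ℕ), 0 < s → s ≤ kstar → Vis (xs (n + s - 1)) (xs n) → False := by
    intro n s hs hsk hw
    refine fullCycleFalse n s (fun t => xs (n + t.val)) hs hsk ?_ (by simp)
    intro i
    rcases Nat.lt_or_ge (i.val + 1) s with hlt | hge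
    · have hnx : nextIdx i = ⟨i.val + 1, hlt⟩ := by
        simp only [nextIdx]; congr 1; exact Nat.mod_eq_of_lt hlt
      rw [hnx]
      show Vis (xs (n + i.val)) (xs (n + (i.val+1)))
      have e : n + (i.val + 1) = (n + i.val) + 1 := by omega
      rw [e, hstep]
      exact hVisG _
    · have hival : i.val = s - 1 := by have := i.isLt; omega
      have hnx : nextIdx i = ⟨0, hs⟩ := by
        simp only [nextIdx]; congr 1
        rw [hival]
        have e : s - 1 + 1 = s := by omega
        rw [e, Nat.mod_self]
      rw [hnx]
      show Vis (xs (n + i.val)) (xs (n + 0))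
      rw [hival, Nat.add_zero]
      have e : n + (s-1) = n + s - 1 := by omega
      rw [e]
      exact hw
  -- ## kstar ≥ 2
  have hkstar2 : 2 ≤ kstar := by
    by_contra h
    have hks1 : kstar = 1 := by omega
    have hvy : Vis (y ⟨0, hkstar⟩) (y ⟨0, hkstar⟩) := by
      have h0 := hy.1.1 ⟨0, hkstar⟩
      have hnx : nextIdx (⟨0, hkstar⟩ : Fin kstar) = ⟨0, hkstar⟩ := by
        simp only [nextIdx]; congr 1
        simp [hks1]
      rwa [hnx] at h0
    have hVisAll : ∀ a b : α, Vis a b := by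
      intro a b
      refine hMono a b _ _ ?_ hvy
      intro p _
      exact btw_self' _ _
    exact fullCycleFalse 0 1 (fun _ => xs 0) one_pos (by omega) (fun i => hVisAll _ _) rfl
  -- ## Y is injective (mod kstar)
  have hYInj : ∀ j j' : ℕ, Y j = Y j' → j % kstar = j' % kstar := by
    intro j j' heq
    by_contra hne'
    have hAk : j % kstar < kstar := Nat.mod_lt _ hkstar
    have hBk : j' % kstar < kstar := Nat.mod_lt _ hkstar
    set A := j % kstar with hA
    set B := j' % kstar with hB
    set c := (A + kstar - B) % kstar with hc
    have hchar := modChar' (k := kstar) hAk hBk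
    have hc0 : 0 < c := by rcases hchar with ⟨h1, h2⟩ | ⟨h1, h2⟩ <;> omega
    have hck : c < kstar := Nat.mod_lt _ hkstar
    have hBC : (B + c) % kstar = A := by
      rcases hchar with ⟨h1, h2⟩ | ⟨h1, h2⟩
      · have e : B + c = A := by omega
        rw [e, Nat.mod_eq_of_lt hAk]
      · have e : B + c = A + kstar := by omega
        rw [e, Nat.add_mod_right, Nat.mod_eq_of_lt hAk]
    have hYBC : Y (j' + c) = Y j' := by
      have e1 : Y (j' + c) = Y j := by
        apply hYeq
        rw [Nat.add_mod j' c, ← hB]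
        have : c % kstar = c := Nat.mod_eq_of_lt hck
        rw [this, hBC, hA]
      rw [e1, heq]
    apply smallCycleFalse c (fun t => Y (j' + t.val)) hc0 hck
    intro i
    rcases Nat.lt_or_ge (i.val + 1) c with hlt | hge
    · have hnx : nextIdx i = ⟨i.val + 1, hlt⟩ := by
        simp only [nextIdx]; congr 1; exact Nat.mod_eq_of_lt hlt
      rw [hnx]
      show Vis (Y (j' + i.val)) (Y (j' + (i.val + 1)))
      have e : j' + (i.val + 1) = (j' + i.val) + 1 := by omega
      rw [e]
      exact hVisY _
    · have hival : i.val = c - 1 := by have := i.isLt; omega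
      have hnx : nextIdx i = ⟨0, hc0⟩ := by
        simp only [nextIdx]; congr 1
        rw [hival]
        have e : c - 1 + 1 = c := by omega
        rw [e, Nat.mod_self]
      rw [hnx]
      show Vis (Y (j' + i.val)) (Y (j' + 0))
      rw [hival, Nat.add_zero]
      have h2 := hVisY (j' + (c-1))
      have e : j' + (c - 1) + 1 = j' + c := by omega
      rw [e, hYBC] at h2
      exact h2
  -- ## Separation: no endpoint strictly inside another interval
  have hSep : ∀ a j : ℕ, btw (Y a) (Y j) (Y (a+1)) → Y j ≠ Y a → Y j ≠ Y (a+1) → False := by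
    intro a j hbtw hne1 hne2
    have hAk : a % kstar < kstar := Nat.mod_lt _ hkstar
    have hBk : j % kstar < kstar := Nat.mod_lt _ hkstar
    set A := a % kstar with hA
    set B := j % kstar with hB
    set c := (A + kstar - B) % kstar with hc
    have hchar := modChar' (k := kstar) hAk hBk
    have hne' : A ≠ B := fun h => hne1 (hYeq (hB ▸ hA ▸ h)).symm
    have hc0 : 0 < c := by rcases hchar with ⟨h1, h2⟩ | ⟨h1, h2⟩ <;> omega
    have hck : c < kstar := Nat.mod_lt _ hkstar
    have hcK : c ≤ kstar - 2 := by
      by_contra hcon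
      have hceq : c = kstar - 1 := by omega
      have hBA1 : B = (A + 1) % kstar := by
        rcases hchar with ⟨h1, h2⟩ | ⟨h1, h2⟩
        · have e1 : A = kstar - 1 := by omega
          have e2 : B = 0 := by omega
          have e3 : A + 1 = kstar := by omega
          rw [e3, Nat.mod_self, e2]
        · have e1 : B = A + 1 := by omega
          rw [← e1, Nat.mod_eq_of_lt hBk]
      apply hne2
      apply hYeq
      rw [modSucc' a]
      exact hBA1
    have hBC : (B + c) % kstar = A := by
      rcases hchar with ⟨h1, h2⟩ | ⟨h1, h2⟩
      · have e : B + c = A := by omega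
        rw [e, Nat.mod_eq_of_lt hAk]
      · have e : B + c = A + kstar := by omega
        rw [e, Nat.add_mod_right, Nat.mod_eq_of_lt hAk]
    have hYjc : Y (j + c) = Y a := by
      apply hYeq
      rw [Nat.add_mod j c, ← hB, Nat.mod_eq_of_lt hck, hBC, hA]
    have hViswrap : Vis (Y a) (Y j) := by
      refine hMono _ _ (Y a) (Y (a+1)) ?_ (hVisY a)
      intro p hp
      exact lt2 hp hbtw hne1
    apply smallCycleFalse (c+1) (fun t => Y (j + t.val)) (by omega) (by omega)
    intro i
    rcases Nat.lt_or_ge (i.val + 1) (c+1) with hlt | hge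
    · have hnx : nextIdx i = ⟨i.val + 1, hlt⟩ := by
        simp only [nextIdx]; congr 1; exact Nat.mod_eq_of_lt hlt
      rw [hnx]
      show Vis (Y (j + i.val)) (Y (j + (i.val + 1)))
      have e : j + (i.val + 1) = (j + i.val) + 1 := by omega
      rw [e]
      exact hVisY _
    · have hival : i.val = c := by have := i.isLt; omega
      have hnx : nextIdx i = ⟨0, by omega⟩ := by
        simp only [nextIdx]; congr 1
        rw [hival]
        rw [Nat.mod_self]
      rw [hnx]
      show Vis (Y (j + i.val)) (Y (j + 0))
      rw [hival, Nat.add_zero, hYjc]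
      exact hViswrap
  -- ## Interior disjointness of intervals
  have hID : ∀ (a b : ℕ) (p : α), btw (Y a) p (Y (a+1)) → btw (Y b) p (Y (b+1)) →
      p ≠ Y a → p ≠ Y (a+1) → p ≠ Y b → p ≠ Y (b+1) → a % kstar = b % kstar := by
    have subID : ∀ (a b : ℕ) (p : α), btw (Y a) p (Y (a+1)) → btw (Y b) p (Y (b+1)) →
        p ≠ Y a → p ≠ Y (a+1) → p ≠ Y b → p ≠ Y (b+1) →
        btw p (Y (b+1)) (Y (a+1)) → a % kstar = b % kstar := by
      intro a b p h1 h2 hpa hpa1 hpb hpb1 hord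
      have step1 : btw (Y a) (Y (b+1)) (Y (a+1)) := lt1 h1 hord hpa1
      rcases eq_or_ne (Y (b+1)) (Y (a+1)) with heq | hne1
      · exact (modPredCongr' hkstar (hYInj _ _ heq)).symm
      rcases eq_or_ne (Y (b+1)) (Y a) with heq2 | hne2
      · -- adjacent case: b+1 ≡ a; derive contradiction
        exfalso
        have hba : (b+1) % kstar = a % kstar := hYInj _ _ heq2
        have h2' : btw (Y b) p (Y a) := by rw [← heq2]; exact h2
        have c1 : btw p (Y a) (Y b) := h2'.cyclic_left
        have c2 : btw p (Y (a+1)) (Y a) := h1.cyclic_left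
        have c3 : btw (Y (a+1)) (Y a) (Y b) := lt3 c2 c1 (Ne.symm hpa)
        have c4 : btw (Y a) (Y b) (Y (a+1)) := c3.cyclic_left
        rcases eq_or_ne (Y b) (Y a) with hba2 | hba2
        · have e1 : b % kstar = a % kstar := hYInj _ _ hba2
          exact modNeSucc' hkstar2 b (by rw [hba, e1])
        rcases eq_or_ne (Y b) (Y (a+1)) with hba3 | hba3
        · -- b ≡ a+1 and b+1 ≡ a: only possible for kstar = 2; use antisymm
          have h1' : btw (Y a) p (Y b) := by rw [hba3]; exact h1
          rcases h1'.antisymm h2' with h | h | h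
          · exact hpa h.symm
          · exact hpb h
          · exact hba2 h
        · exact hSep a b c4 hba2 hba3
      · exact (hSep a (b+1) step1 hne2 hne1).elim
    intro a b p h1 h2 hpa hpa1 hpb hpb1
    rcases btw_total'' p (Y (b+1)) (Y (a+1)) with hord | hord
    · exact subID a b p h1 h2 hpa hpa1 hpb hpb1 hord
    · exact (subID b a p h2 h1 hpb hpb1 hpa hpa1 hord).symm
  -- ## Advance lemma: a greedy step passes the next endpoint
  have lemA : ∀ n j : ℕ, btw (Y j) (xs n) (Y (j+1)) → btw (xs n) (Y (j+1)) (xs (n+1)) := by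
    intro n j h
    have hvis : Vis (xs n) (Y (j+1)) := by
      refine hMono _ _ (Y j) (Y (j+1)) ?_ (hVisY j)
      intro p hp
      exact lt1 h hp (Ne.symm (hne (j+1) n))
    have hg := hGmax _ _ hvis
    rwa [← hstep n] at hg
  -- ## Key lemma: each greedy step stays within one optimal interval
  have keyLemma : ∀ n j : ℕ, btw (Y j) (xs n) (Y (j+1)) → btw (Y (j+1)) (xs (n+1)) (Y (j+2)) := by
    intro n j hn
    by_contra hgoal
    have hA := lemA n j hn
    obtain ⟨J', hJ'lt, hJ'⟩ := hcov (xs (n+1))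
    have hJmod : J' % kstar = J' := Nat.mod_eq_of_lt hJ'lt
    by_cases hj1 : J' % kstar = (j+1) % kstar
    · apply hgoal
      have e1 : Y (j+1) = Y J' := hYeq hj1.symm
      have e2 : Y (j+2) = Y (J'+1) := hYeq (modSuccCongr' hj1).symm
      rw [e1, e2]
      exact hJ'
    by_cases hj0 : J' % kstar = j % kstar
    · -- same interval as xs n
      have hJ'' : btw (Y j) (xs (n+1)) (Y (j+1)) := by
        have e1 : Y J' = Y j := hYeq hj0
        have e2 : Y (J'+1) = Y (j+1) := hYeq (modSuccCongr' hj0)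
        rw [e1, e2] at hJ'
        exact hJ'
      have hxne : xs (n+1) ≠ xs n := by rw [hstep n]; exact hGne _
      rcases btw_total'' (Y j) (xs (n+1)) (xs n) with hcase | hcase
      · have hsub : arcCC (xs (n+1)) (xs n) ⊆ arcCC (Y j) (Y (j+1)) := by
          intro p hp
          have h1' : btw (Y j) p (xs n) := lt1 hcase hp hxne
          exact lt2 h1' hn (Ne.symm (hne j n))
        have hvis2 : Vis (xs (n+1)) (xs n) := hMono _ _ _ _ hsub (hVisY j)
        refine cycleFalse n 2 (by omega) hkstar2 ?_
        have e : n + 2 - 1 = n + 1 := by omega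
        rw [e]
        exact hvis2
      · have h3 : btw (xs n) (xs (n+1)) (Y (j+1)) := lt3 hcase hJ'' (Ne.symm (hne j (n+1)))
        rcases hA.antisymm h3.cyclic_left with h | h | h
        · exact hne (j+1) n h.symm
        · exact hne (j+1) (n+1) h
        · exact hxne h
    · -- generic case: build a short cycle through xs n
      have hAj : j % kstar < kstar := Nat.mod_lt _ hkstar
      obtain ⟨c, hcdef⟩ : ∃ c, c = (j % kstar + kstar - J') % kstar := ⟨_, rfl⟩
      have hchar := modChar' (k := kstar) hAj hJ'lt
      rw [← hcdef] at hchar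
      have hck : c < kstar := hcdef ▸ Nat.mod_lt _ hkstar
      have hc0 : 0 < c := by
        rcases hchar with ⟨h1, h2⟩ | ⟨h1, h2⟩
        · have : J' ≠ j % kstar := by rw [← hJmod]; exact fun h => hj0 (by rw [hJmod] at h; rw [hJmod]; exact h)
          omega
        · omega
      have hcK : c ≤ kstar - 2 := by
        by_contra hcon
        have hceq : c = kstar - 1 := by omega
        apply hj1
        rw [hJmod]
        rcases hchar with ⟨h1, h2⟩ | ⟨h1, h2⟩
        · have e1 : j % kstar = kstar - 1 := by omega
          have e2 : J' = 0 := by omega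
          rw [e2, modSucc' j, e1]
          have e3 : kstar - 1 + 1 = kstar := by omega
          rw [e3, Nat.mod_self]
        · have e1 : J' = j % kstar + 1 := by omega
          rw [e1, modSucc' j]
          exact (Nat.mod_eq_of_lt (by omega)).symm
      have hwrap_idx : (J' + c) % kstar = j % kstar := by
        rcases hchar with ⟨h1, h2⟩ | ⟨h1, h2⟩
        · have e : J' + c = j % kstar := by omega
          rw [e, Nat.mod_eq_of_lt hAj]
        · have e : J' + c = j % kstar + kstar := by omega
          rw [e, Nat.add_mod_right, Nat.mod_eq_of_lt hAj]
      obtain ⟨z, hz⟩ : ∃ z : Fin (c+2) → α, ∀ t : Fin (c+2),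
          z t = if t.val = 0 then xs n else if t.val = 1 then xs (n+1)
            else Y (J' + t.val - 1) := ⟨_, fun _ => rfl⟩
      refine fullCycleFalse n (c+2) z (by omega) (by omega) ?_ (by rw [hz]; simp)
      intro i
      have hilt : i.val < c + 2 := i.isLt
      by_cases h0 : i.val = 0
      · have hnx : nextIdx i = ⟨1, by omega⟩ := by
          simp only [nextIdx]; congr 1
          rw [h0]
          exact Nat.mod_eq_of_lt (by omega)
        rw [hnx]
        have e1 : z i = xs n := by rw [hz]; simp [h0]
        have e2 : z ⟨1, by omega⟩ = xs (n+1) := by rw [hz]; simp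
        rw [e1, e2, hstep]
        exact hVisG _
      by_cases h1v : i.val = 1
      · have hnx : nextIdx i = ⟨2, by omega⟩ := by
          simp only [nextIdx]; congr 1
          rw [h1v]
          exact Nat.mod_eq_of_lt (by omega)
        rw [hnx]
        have e1 : z i = xs (n+1) := by rw [hz]; simp [h1v]
        have e2 : z ⟨2, by omega⟩ = Y (J' + 1) := by
          rw [hz]
          have e : J' + 2 - 1 = J' + 1 := by omega
          simp [e]
        rw [e1, e2]
        refine hMono _ _ (Y J') (Y (J'+1)) ?_ (hVisY J')
        intro p hp
        exact lt1 hJ' hp (Ne.symm (hne (J'+1) (n+1)))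
      by_cases hlast : i.val = c + 1
      · have hnx : nextIdx i = ⟨0, by omega⟩ := by
          simp only [nextIdx]; congr 1
          rw [hlast]
          have e : c + 1 + 1 = c + 2 := by omega
          rw [e, Nat.mod_self]
        rw [hnx]
        have e1 : z i = Y (J' + c) := by
          rw [hz, if_neg h0, if_neg h1v, hlast]
          congr 1 <;> omega
        have e2 : z ⟨0, by omega⟩ = xs n := by rw [hz]; simp
        rw [e1, e2]
        have hYj : Y (J' + c) = Y j := hYeq hwrap_idx
        rw [hYj]
        refine hMono _ _ (Y j) (Y (j+1)) ?_ (hVisY j)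
        intro p hp
        exact lt2 hp hn (Ne.symm (hne j n))
      · have hi2 : 2 ≤ i.val := by omega
        have hic : i.val ≤ c := by omega
        have hnx : nextIdx i = ⟨i.val + 1, by omega⟩ := by
          simp only [nextIdx]; congr 1
          exact Nat.mod_eq_of_lt (by omega)
        rw [hnx]
        have e1 : z i = Y (J' + i.val - 1) := by rw [hz, if_neg h0, if_neg h1v]
        have e2 : z ⟨i.val + 1, by omega⟩ = Y (J' + i.val) := by
          rw [hz]
          show (if i.val + 1 = 0 then xs n else if i.val + 1 = 1 then xs (n + 1)
            else Y (J' + (i.val + 1) - 1)) = Y (J' + i.val)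
          rw [if_neg (by omega : ¬ (i.val + 1 = 0)), if_neg (by omega : ¬ (i.val + 1 = 1))]
          congr 1 <;> omega
        rw [e1, e2]
        have h2 := hVisY (J' + i.val - 1)
        have e : J' + i.val - 1 + 1 = J' + i.val := by omega
        rw [e] at h2
        exact h2
  -- ## Chain: alignment of greedy points with optimal intervals
  obtain ⟨I0, hI0lt, hI0⟩ := hcov (xs 0)
  have chainI : ∀ t : ℕ, btw (Y (I0 + t)) (xs t) (Y (I0 + t + 1)) := by
    intro t
    induction t with
    | zero => exact hI0
    | succ t ih =>
      have h := keyLemma t (I0 + t) ih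
      have e1 : I0 + (t+1) = I0 + t + 1 := by omega
      rw [e1]
      exact h
  have hy0btw : btw (xs 0) (Y 0) (xs 1) := by
    rw [hYdef]
    have e : (⟨0 % kstar, Nat.mod_lt _ hkstar⟩ : Fin kstar) = ⟨0, hkstar⟩ :=
      Fin.ext (Nat.zero_mod _)
    rw [e]
    exact hy0.1
  have hUniq : Y 0 = Y (I0 + 1) := by
    have hC1 : btw (Y (I0 + 1)) (xs 1) (Y (I0 + 2)) := chainI 1
    rcases btw_total'' (xs 0) (Y 0) (Y (I0+1)) with hT | hT
    · have hb : btw (Y I0) (Y 0) (Y (I0+1)) := lt1 hI0 hT (Ne.symm (hne (I0+1) 0))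
      rcases eq_or_ne (Y 0) (Y I0) with he | he
      · exfalso
        have h1 : btw (xs 0) (Y I0) (Y (I0+1)) := by rw [← he]; exact hT
        have h2 : btw (Y (I0+1)) (Y I0) (xs 0) := hI0.cyclic_left.cyclic_left
        rcases h1.antisymm h2 with h | h | h
        · exact hne I0 0 h.symm
        · exact modNeSucc' hkstar2 I0 (hYInj _ _ h)
        · exact hne (I0+1) 0 h
      rcases eq_or_ne (Y 0) (Y (I0+1)) with he2 | he2
      · exact he2
      · exact (hSep I0 0 hb he he2).elim
    · have hb1 : btw (Y (I0+1)) (Y 0) (xs 1) := lt3 hT hy0btw (hne 0 0)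
      have hb2 : btw (Y (I0+1)) (Y 0) (Y (I0+2)) := lt2 hb1 hC1 (Ne.symm (hne (I0+1) 1))
      rcases eq_or_ne (Y 0) (Y (I0+1)) with he | he
      · exact he
      rcases eq_or_ne (Y 0) (Y (I0+2)) with he2 | he2
      · exfalso
        have h1 : btw (Y (I0+1)) (Y (I0+2)) (xs 1) := by rw [← he2]; exact hb1
        have h2 : btw (xs 1) (Y (I0+2)) (Y (I0+1)) := hC1.cyclic_left
        rcases h1.antisymm h2 with h | h | h
        · exact modNeSucc' hkstar2 (I0+1) (hYInj _ _ h)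
        · exact hne (I0+2) 1 h
        · exact hne (I0+1) 1 h.symm
      · exact (hSep (I0+1) 0 hb2 he he2).elim
  have hI0eq : I0 = kstar - 1 := by
    have h := hYInj _ _ hUniq
    rw [Nat.zero_mod] at h
    rcases Nat.lt_or_ge (I0 + 1) kstar with hh | hh
    · rw [Nat.mod_eq_of_lt hh] at h
      omega
    · omega
  have chain : ∀ t : ℕ, btw (Y (kstar - 1 + t)) (xs t) (Y (kstar + t)) := by
    intro t
    have h := chainI t
    rw [hI0eq] at h
    have e : kstar - 1 + t + 1 = kstar + t := by omega
    rw [e] at h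
    exact h
  -- ## Monotone revolutions
  have lemM : ∀ t : ℕ,
      btw (Y (kstar - 1 + t)) (xs (t + kstar)) (xs t) ∧ xs (t + kstar) ≠ xs t := by
    intro t
    induction t with
    | zero =>
      have hne0 : xs kstar ≠ xs 0 := by
        intro he
        refine cycleFalse 0 kstar (by omega) le_rfl ?_
        have h := hVisG (xs (kstar - 1))
        rw [← hstep (kstar - 1)] at h
        rw [show kstar - 1 + 1 = kstar by omega, he] at h
        rw [show 0 + kstar - 1 = kstar - 1 by omega]
        exact h
      have hbtw0 : btw (Y (kstar - 1)) (xs kstar) (xs 0) := by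
        by_contra hcon
        have hcase : btw (Y (kstar - 1)) (xs 0) (xs kstar) :=
          (btw_total'' _ _ _).resolve_left hcon
        have hh := chain (kstar - 1)
        rw [show kstar + (kstar - 1) = (kstar - 1 + (kstar - 1)) + 1 by omega] at hh
        have hB := lemA (kstar - 1) (kstar - 1 + (kstar - 1)) hh
        rw [show kstar - 1 + (kstar - 1) + 1 = (kstar - 1) + kstar by omega, hYper,
            show kstar - 1 + 1 = kstar by omega] at hB
        have hne01 : xs 0 ≠ xs (kstar - 1) := by
          intro he
          refine cycleFalse 0 (kstar - 1) (by omega) (by omega) ?_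
          have h := hVisG (xs (kstar - 2))
          rw [← hstep (kstar - 2)] at h
          rw [show kstar - 2 + 1 = kstar - 1 by omega, ← he] at h
          rw [show 0 + (kstar - 1) - 1 = kstar - 2 by omega]
          exact h
        have hc : btw (xs (kstar - 1)) (xs 0) (xs kstar) :=
          lt1 hB hcase (hne (kstar - 1) kstar)
        have hvis : Vis (xs (kstar - 1)) (xs 0) := by
          refine hMono _ _ (xs (kstar - 1)) (xs kstar) ?_ ?_
          · intro p hp
            exact lt2 hp hc hne01
          · have h := hVisG (xs (kstar - 1))
            rw [← hstep (kstar - 1)] at h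
            rw [show kstar - 1 + 1 = kstar by omega] at h
            exact h
        refine cycleFalse 0 kstar (by omega) le_rfl ?_
        rw [show 0 + kstar - 1 = kstar - 1 by omega]
        exact hvis
      refine ⟨?_, ?_⟩
      · rw [Nat.add_zero, Nat.zero_add]
        exact hbtw0
      · rw [Nat.zero_add]
        exact hne0
    | succ t ih =>
      have Ct : btw (Y (kstar - 1 + t)) (xs t) (Y (kstar + t)) := chain t
      have step1 : btw (xs (t + kstar)) (xs t) (Y (kstar + t)) :=
        lt3 ih.1 Ct (Ne.symm (hne (kstar - 1 + t) t))
      have step2 : btw (xs (t + kstar)) (Y (kstar + t)) (xs (t + kstar + 1)) := by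
        have hh := chain (t + kstar)
        rw [show kstar + (t + kstar) = (kstar - 1 + (t + kstar)) + 1 by omega] at hh
        have h := lemA (t + kstar) (kstar - 1 + (t + kstar)) hh
        rw [show kstar - 1 + (t + kstar) + 1 = (kstar + t) + kstar by omega, hYper] at h
        exact h
      have step3 : btw (xs (t + kstar)) (xs t) (xs (t + kstar + 1)) :=
        lt2 step1 step2 (hne (kstar + t) (t + kstar))
      have step4 : btw (xs t) (xs (t + kstar + 1)) (xs (t + 1)) := by
        by_cases heq : xs t = xs (t + kstar + 1)
        · rw [← heq]
          exact btw_rfl_left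
        · have hvis : Vis (xs t) (xs (t + kstar + 1)) := by
            refine hMono _ _ (xs (t + kstar)) (xs (t + kstar + 1)) ?_ ?_
            · intro p hp
              exact lt1 step3 hp heq
            · rw [hstep (t + kstar)]
              exact hVisG _
          have h := hGmax _ _ hvis
          rwa [← hstep t] at h
      have hneq_tv : xs t ≠ xs (t + kstar + 1) := by
        intro he
        have hp1 : btw (Y (kstar - 1 + t)) (xs t) (Y (kstar - 1 + t + 1)) := by
          rw [show kstar - 1 + t + 1 = kstar + t by omega]
          exact Ct
        have hp2 : btw (Y (kstar + t)) (xs t) (Y (kstar + t + 1)) := by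
          have h := chain (t + kstar + 1)
          rw [show kstar - 1 + (t + kstar + 1) = (kstar + t) + kstar by omega,
              show kstar + (t + kstar + 1) = (kstar + t + 1) + kstar by omega,
              hYper, hYper, ← he] at h
          exact h
        have hid := hID (kstar - 1 + t) (kstar + t) (xs t) hp1 hp2
          (Ne.symm (hne _ _)) (Ne.symm (hne _ _)) (Ne.symm (hne _ _)) (Ne.symm (hne _ _))
        apply modNeSucc' hkstar2 (kstar - 1 + t)
        rw [show kstar - 1 + t + 1 = kstar + t by omega]
        exact hid
      have step5 : btw (xs t) (Y (kstar + t)) (xs (t + kstar + 1)) :=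
        lt3 step1 step2 (hne (kstar + t) (t + kstar))
      have step6 : btw (Y (kstar + t)) (xs (t + kstar + 1)) (xs (t + 1)) :=
        lt3 step5 step4 (Ne.symm hneq_tv)
      refine ⟨?_, ?_⟩
      · rw [show kstar - 1 + (t + 1) = kstar + t by omega,
            show t + 1 + kstar = t + kstar + 1 by omega]
        exact step6
      · rw [show t + 1 + kstar = t + kstar + 1 by omega]
        intro he
        refine cycleFalse (t + 1) kstar (by omega) le_rfl ?_
        have h := hVisG (xs (t + kstar))
        rw [← hstep (t + kstar), he] at h
        rw [show t + 1 + kstar - 1 = t + kstar by omega]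
        exact h
  -- ## k = kstar
  have eY0 : Y kstar = Y 0 := by
    rw [show kstar = 0 + kstar by omega]
    exact hYper 0
  have eY1 : Y (kstar + 1) = Y 1 := by
    rw [show kstar + 1 = 1 + kstar by omega]
    exact hYper 1
  have hC1' : btw (Y 0) (xs 1) (Y 1) := by
    have h := chain 1
    rw [show kstar - 1 + 1 = kstar by omega, eY0, eY1] at h
    exact h
  have hM1 : btw (Y 0) (xs (kstar + 1)) (xs 1) ∧ xs (kstar + 1) ≠ xs 1 := by
    have h := lemM 1
    rw [show kstar - 1 + 1 = kstar by omega, show 1 + kstar = kstar + 1 by omega, eY0] at h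
    exact h
  have hklek : k ≤ kstar := by
    apply hkmin
    exact ⟨lt1 hy0btw hM1.1 (hne 0 1), hM1.2⟩
  have hkbtw : btw (xs 0) (xs (k+1)) (xs 1) := hk.1
  have hkne1 : xs (k+1) ≠ xs 1 := hk.2
  have hkpos : 1 ≤ k := by
    rcases Nat.eq_zero_or_pos k with h0 | h0
    · subst h0
      exact (hkne1 rfl).elim
    · exact h0
  have hkgek : kstar ≤ k := by
    by_contra hcon
    have hklt : k < kstar := by omega
    have hne_k10 : xs (k+1) ≠ xs 0 := by
      intro he
      refine cycleFalse 0 (k+1) (by omega) (by omega) ?_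
      have h := hVisG (xs k)
      rw [← hstep k, he] at h
      rw [show 0 + (k+1) - 1 = k by omega]
      exact h
    have hCk1 : btw (Y (kstar + k)) (xs (k+1)) (Y (kstar + k + 1)) := by
      have h := chain (k+1)
      rw [show kstar - 1 + (k+1) = kstar + k by omega,
          show kstar + (k+1) = kstar + k + 1 by omega] at h
      exact h
    have emod : (kstar + k) % kstar = k := by
      rw [Nat.add_comm kstar k, Nat.add_mod_right, Nat.mod_eq_of_lt hklt]
    rcases btw_total'' (xs 0) (xs (k+1)) (Y 0) with hα | hβ
    · have hC0 : btw (Y (kstar - 1)) (xs 0) (Y kstar) := by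
        have h := chain 0
        rwa [Nat.add_zero, Nat.add_zero] at h
      have hC0' : btw (Y (kstar - 1)) (xs 0) (Y 0) := by rw [← eY0]; exact hC0
      have hint : btw (Y (kstar - 1)) (xs (k+1)) (Y 0) := lt1 hC0' hα (Ne.symm (hne 0 0))
      have hID1 := hID (kstar - 1) (kstar + k) (xs (k+1))
        (by rw [show kstar - 1 + 1 = kstar by omega, eY0]; exact hint) hCk1
        (Ne.symm (hne _ _)) (Ne.symm (hne _ _)) (Ne.symm (hne _ _)) (Ne.symm (hne _ _))
      have emod2 : (kstar - 1) % kstar = kstar - 1 := Nat.mod_eq_of_lt (by omega)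
      have hkk1 : k = kstar - 1 := by
        rw [emod2, emod] at hID1
        omega
      have hM0 : btw (Y (kstar - 1)) (xs kstar) (xs 0) ∧ xs kstar ≠ xs 0 := by
        have h := lemM 0
        rwa [Nat.add_zero, Nat.zero_add] at h
      have hα' : btw (xs 0) (xs kstar) (Y 0) := by
        rw [show kstar = k + 1 by omega]
        exact hα
      have g1 : btw (xs kstar) (xs 0) (Y 0) := lt3 hM0.1 hC0' (Ne.symm (hne (kstar - 1) 0))
      have g2 : btw (Y 0) (xs 0) (xs kstar) := hα'.cyclic_left.cyclic_left
      rcases g1.antisymm g2 with h | h | h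
      · exact hM0.2 h
      · exact hne 0 0 h.symm
      · exact hne 0 kstar h
    · have hb1 : btw (Y 0) (xs (k+1)) (xs 1) := lt3 hβ hkbtw hne_k10
      have hb2 : btw (Y 0) (xs (k+1)) (Y 1) := lt2 hb1 hC1' (Ne.symm (hne 0 1))
      have hID2 := hID 0 (kstar + k) (xs (k+1)) hb2 hCk1
        (Ne.symm (hne _ _)) (Ne.symm (hne _ _)) (Ne.symm (hne _ _)) (Ne.symm (hne _ _))
      rw [Nat.zero_mod, emod] at hID2
      omega
  have hkk : k = kstar := le_antisymm hklek hkgek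
  -- ## Conclusion
  intro m hm1 hmk i hi1
  have hik : i * k = (i-1) * k + k := by
    calc i * k = ((i-1)+1) * k := by rw [show (i-1)+1 = i by omega]
    _ = (i-1) * k + k := by rw [Nat.succ_mul]
  have e_ik : i * k + m = ((i - 1) * k + m) + kstar := by
    rw [hik, hkk]
    generalize (i-1) * kstar = P
    omega
  have h := lemM ((i-1) * k + m)
  have eY : Y (kstar - 1 + ((i-1) * k + m)) = y ⟨(m-1) % kstar, Nat.mod_lt _ hkstar⟩ := by
    rw [hYdef]
    congr 1
    apply Fin.ext
    show (kstar - 1 + ((i-1) * k + m)) % kstar = (m - 1) % kstar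
    rw [hkk]
    have hrw : kstar - 1 + ((i-1) * kstar + m) = (m - 1) + (i-1) * kstar + kstar := by
      generalize (i-1) * kstar = P
      omega
    rw [hrw, Nat.add_mod_right, Nat.add_mul_mod_self_right]
  rw [eY, ← e_ik] at h
  exact ⟨h.1, h.2⟩
end

section
/- If a greedy sequence contains two equal points x_i = x_j with i < j, then the k* consecutive points starting at x_j form an optimal partition of the boundary. -/
open Set

namespace PIO
variable {α : Type*} [CircularOrder α]

lemma sbtw_of_btw_of_ne {a b c : α} (h : btw a b c) (hab : a ≠ b) (hbc : b ≠ c)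
    (hca : c ≠ a) : sbtw a b c := by
  refine h.sbtw_of_not_btw (fun h' => ?_)
  rcases btw_antisymm h h' with h'' | h'' | h''
  · exact hab h''
  · exact hbc h''
  · exact hca h''

/-- first-fixed transitivity of `btw`. -/
lemma lff {a b c d : α} (h1 : btw a b c) (h2 : btw a c d) (hac : a ≠ c) : btw a b d := by
  by_cases hab : a = b
  · exact hab ▸ btw_rfl_left
  by_cases hbc : b = c
  · exact hbc ▸ h2
  by_cases hbd : b = d
  · exact hbd ▸ btw_rfl_right
  by_cases hcd : c = d
  · exact hcd ▸ h1
  by_cases had : a = d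
  · exact had ▸ btw_rfl_left_right
  have s1 : sbtw a b c := sbtw_of_btw_of_ne h1 hab hbc (fun h => hac h.symm)
  have s2 : sbtw a c d := sbtw_of_btw_of_ne h2 hac hcd (fun h => had h.symm)
  exact (sbtw_trans_right s1 s2).btw

/-- middle removal: if going from `a` we see `b` then `c`, and from `a` we see `c` then `d`,
then from `b` we see `c` then `d`. -/
lemma l6 {a b c d : α} (h1 : btw a b c) (h2 : btw a c d) (hac : a ≠ c) : btw b c d := by
  by_cases hab : a = b
  · exact hab ▸ h2
  by_cases hbc : b = c
  · exact hbc ▸ btw_rfl_left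
  by_cases hcd : c = d
  · exact hcd ▸ btw_rfl_right
  by_cases hbd : b = d
  · exact hbd ▸ btw_rfl_left_right
  by_cases had : a = d
  · exact had ▸ h1.cyclic_left
  by_contra hn
  have hn' : sbtw d c b := sbtw_iff_not_btw.2 hn
  have s1 : sbtw a b c := sbtw_of_btw_of_ne h1 hab hbc (fun h => hac h.symm)
  have s2 : sbtw a c d := sbtw_of_btw_of_ne h2 hac hcd (fun h => had h.symm)
  have t1 : sbtw c b d := hn'.cyclic_left
  have t2 : sbtw c d a := s2.cyclic_left
  have t3 : sbtw c b a := sbtw_trans_right t1 t2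
  have t4 : sbtw c a b := s1.cyclic_left.cyclic_left
  exact sbtw_irrefl_right (sbtw_trans_right t3 t4)

/-- prefix extension. -/
lemma pext {a m b w : α} (h1 : btw a m b) (h2 : btw m w b) (hmb : m ≠ b) : btw a w b := by
  by_cases hwm : w = m
  · exact hwm ▸ h1
  by_cases hwb : w = b
  · exact hwb ▸ btw_rfl_right
  by_cases ham : a = m
  · exact ham ▸ h2
  by_cases hab : a = b
  · exact hab ▸ btw_rfl_left_right
  by_cases haw : a = w
  · exact haw ▸ btw_rfl_left
  have s1 : sbtw a m b := sbtw_of_btw_of_ne h1 ham hmb (fun h => hab h.symm)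
  have s2 : sbtw m w b := sbtw_of_btw_of_ne h2 (fun h => hwm h.symm) hwb (fun h => hmb h.symm)
  exact (sbtw_trans_left s1 s2).btw

lemma midtrans {a b c x : α} (h1 : sbtw a x b) (h2 : sbtw b x c) : sbtw a x c := by
  have u1 : sbtw b a x := h1.cyclic_left.cyclic_left
  have u2 : sbtw c b x := h2.cyclic_left.cyclic_left
  exact (sbtw_trans_left u2 u1).cyclic_left


open scoped Classical in
/-- crossing indicator: `1` if the basepoint `x0` lies in the half-open arc `(u, v]`. -/
noncomputable def cx (x0 u v : α) : ℕ := if (btw u x0 v ∧ x0 ≠ u) then 1 else 0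

/-- the cut (linear) order at basepoint `x0`. -/
def cle (x0 u v : α) : Prop := sbtw x0 u v ∨ u = v ∨ u = x0

variable {x0 u v w : α}

lemma cle_refl (x0 u : α) : cle x0 u u := Or.inr (Or.inl rfl)

lemma cle_x0 (x0 u : α) : cle x0 x0 u := Or.inr (Or.inr rfl)

lemma cle_trans (h1 : cle x0 u v) (h2 : cle x0 v w) : cle x0 u w := by
  rcases h1 with h1 | h1 | h1
  · rcases h2 with h2 | h2 | h2
    · exact Or.inl (sbtw_trans_right h1 h2)
    · exact h2 ▸ Or.inl h1
    · exact absurd (h2 ▸ h1) sbtw_irrefl_left_right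
  · exact h1 ▸ h2
  · exact Or.inr (Or.inr h1)

lemma cle_antisymm (h1 : cle x0 u v) (h2 : cle x0 v u) : u = v := by
  rcases h1 with h1 | h1 | h1
  · rcases h2 with h2 | h2 | h2
    · exact (h1.not_btw h2.btw.cyclic_left).elim
    · exact h2.symm
    · rw [h2] at h1
      exact (sbtw_irrefl_left_right h1).elim
  · exact h1
  · rcases h2 with h2 | h2 | h2
    · rw [h1] at h2
      exact (sbtw_irrefl_left_right h2).elim
    · exact h2.symm
    · exact h1.trans h2.symm

lemma cle_intro (h : btw x0 u v) (himp : v = x0 → u = x0) : cle x0 u v := by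
  by_cases h1 : u = v
  · exact Or.inr (Or.inl h1)
  by_cases h2 : u = x0
  · exact Or.inr (Or.inr h2)
  by_cases h3 : v = x0
  · exact absurd (himp h3) h2
  · exact Or.inl (sbtw_of_btw_of_ne h (Ne.symm h2) h1 h3)

lemma cle_btw (h : cle x0 u v) : btw x0 u v := by
  rcases h with h | h | h
  · exact h.btw
  · exact h ▸ btw_rfl_right
  · exact h ▸ btw_rfl_left

lemma cx_one (h1 : btw u x0 v) (h2 : x0 ≠ u) : cx x0 u v = 1 := by
  classical
  simp only [cx]
  rw [if_pos ⟨h1, h2⟩]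

lemma cx_zero (h : ¬(btw u x0 v ∧ x0 ≠ u)) : cx x0 u v = 0 := by
  classical
  simp only [cx]
  rw [if_neg h]

lemma cx_cases (x0 u v : α) :
    cx x0 u v = 0 ∨ (cx x0 u v = 1 ∧ btw u x0 v ∧ x0 ≠ u) := by
  classical
  by_cases h : btw u x0 v ∧ x0 ≠ u
  · exact Or.inr ⟨cx_one h.1 h.2, h⟩
  · exact Or.inl (cx_zero h)

lemma cx_x0_left (x0 v : α) : cx x0 x0 v = 0 := cx_zero (by simp)

lemma nocross (h0 : cx x0 u v = 0) (hne : u ≠ v) : cle x0 u v := by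
  by_cases hux : u = x0
  · exact Or.inr (Or.inr hux)
  have hnb : ¬ btw u x0 v := by
    intro hb
    rw [cx_one hb (Ne.symm hux)] at h0
    exact one_ne_zero h0
  have hs : sbtw v x0 u := sbtw_iff_not_btw.2 hnb
  exact Or.inl hs.cyclic_left

lemma cle_cx_zero (h : cle x0 u v) (hne : u ≠ v) : cx x0 u v = 0 := by
  apply cx_zero
  rintro ⟨hb, hx⟩
  rcases h with hs | he | hx0
  · have h1 : btw v u x0 := hb.cyclic_left.cyclic_left
    rcases btw_antisymm hs.btw h1 with h' | h' | h'
    · exact hx h'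
    · exact hne h'
    · rw [h'] at hs
      exact sbtw_irrefl_left_right hs
  · exact hne he
  · exact hx hx0.symm

lemma cross_cle (hb : btw u x0 v) (hx : x0 ≠ u) : cle x0 v u :=
  cle_intro hb.cyclic_left (fun h => (hx h.symm).elim)

lemma crossback0 (hb : btw u x0 v) (hx : x0 ≠ u) (hvu : v ≠ u) : cx x0 v u = 0 := by
  apply cx_zero
  rintro ⟨h1, h2⟩
  rcases btw_antisymm hb h1 with h' | h' | h'
  · exact hx h'.symm
  · exact h2 h'
  · exact hvu h'

/-- lex order on (lapcount, position). -/
def Lle (x0 : α) (a : ℕ) (u : α) (b : ℕ) (v : α) : Prop := a < b ∨ (a = b ∧ cle x0 u v)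

lemma lle_refl (x0 : α) (a : ℕ) (u : α) : Lle x0 a u a u := Or.inr ⟨rfl, cle_refl x0 u⟩

lemma lle_trans {a b c : ℕ} {u v w : α} (h1 : Lle x0 a u b v) (h2 : Lle x0 b v c w) :
    Lle x0 a u c w := by
  rcases h1 with h1 | ⟨e1, h1⟩
  · rcases h2 with h2 | ⟨e2, h2⟩
    · exact Or.inl (h1.trans h2)
    · exact Or.inl (e2 ▸ h1)
  · rcases h2 with h2 | ⟨e2, h2⟩
    · exact Or.inl (e1 ▸ h2)
    · exact Or.inr ⟨e1.trans e2, cle_trans h1 h2⟩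

lemma lle_add_left (c : ℕ) {a b : ℕ} {u v : α} (h : Lle x0 a u b v) :
    Lle x0 (c + a) u (c + b) v := by
  rcases h with h | ⟨e, h⟩
  · exact Or.inl (by omega)
  · exact Or.inr ⟨by omega, h⟩

lemma lle_fst {a b : ℕ} {u v : α} (h : Lle x0 a u b v) : a ≤ b := by
  rcases h with h | ⟨e, _⟩ <;> omega

/-- Key splitting lemma: if `w ∈ [u,v]` then `(cx u w, w) ≤lex (cx u v, v)`. -/
lemma csplit (x0 : α) {u w v : α} (hbtw : btw u w v) (hwu : w ≠ u) (hvu : v ≠ u) :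
    Lle x0 (cx x0 u w) w (cx x0 u v) v := by
  by_cases hwv : w = v
  · exact hwv ▸ lle_refl x0 _ w
  rcases cx_cases x0 u w with h0 | ⟨h1, hb, hx⟩
  · -- no crossing in [u,w]
    rcases cx_cases x0 u v with g0 | ⟨g1, _, _⟩
    · -- no crossing in [u,v] either: position comparison
      rw [h0, g0]
      refine Or.inr ⟨rfl, ?_⟩
      by_cases hux : u = x0
      · subst hux
        exact cle_intro hbtw (fun h => absurd h hvu)
      have hclw : cle x0 u w := nocross h0 (Ne.symm hwu)
      have hclv : cle x0 u v := nocross g0 (Ne.symm hvu)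
      rcases hclw with hsw | hew | hxw
      · rcases hclv with hsv | hev | hxv
        · have hsuwv : sbtw u w v := sbtw_of_btw_of_ne hbtw (Ne.symm hwu) hwv hvu
          exact Or.inl (sbtw_trans_left hsv hsuwv)
        · exact absurd hev.symm hvu
        · exact absurd hxv hux
      · exact absurd hew.symm hwu
      · exact absurd hxw hux
    · rw [h0, g1]; exact Or.inl Nat.zero_lt_one
  · -- crossing in [u,w]
    have hbv : btw u x0 v := lff hb hbtw (Ne.symm hwu)
    rw [h1, cx_one hbv hx]
    refine Or.inr ⟨rfl, ?_⟩
    by_cases hwx : w = x0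
    · exact hwx ▸ cle_x0 x0 v
    have h3 : btw x0 w v := l6 hb hbtw (Ne.symm hwu)
    refine cle_intro h3 (fun hvx => ?_)
    -- v = x0 forces w = x0
    have hA : btw u w x0 := hvx ▸ hbtw
    have hB : btw x0 w u := hb.cyclic_left
    rcases btw_antisymm hA hB with h' | h' | h'
    · exact absurd h'.symm hwu
    · exact h'
    · exact absurd h' hx


section Greedy

variable {Vis : α → α → Prop} {G : α → α}

lemma gm (hMono : ∀ a b c d : α, arcCC a b ⊆ arcCC c d → Vis c d → Vis a b)
    (hVisG : ∀ x : α, Vis x (G x)) (hGmax : ∀ x y : α, Vis x y → btw x y (G x))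
    {u v : α} (h : btw u v (G u)) : btw v (G u) (G v) := by
  by_cases hvu : v = u
  · subst hvu; exact btw_rfl_right
  by_cases hvg : v = G u
  · rw [← hvg]; exact btw_rfl_left
  have hsub : arcCC v (G u) ⊆ arcCC u (G u) := fun w hw => pext h hw hvg
  exact hGmax v (G u) (hMono v (G u) u (G u) hsub (hVisG u))

lemma gmono (hMono : ∀ a b c d : α, arcCC a b ⊆ arcCC c d → Vis c d → Vis a b)
    (hVisG : ∀ x : α, Vis x (G x)) (hGmax : ∀ x y : α, Vis x y → btw x y (G x))
    (hGne : ∀ x : α, G x ≠ x) (x0 : α) {a b : ℕ} {u v : α} (h : Lle x0 a u b v) :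
    Lle x0 (a + cx x0 u (G u)) (G u) (b + cx x0 v (G v)) (G v) := by
  have hGu := hGne u
  have hGv := hGne v
  rcases h with hab | ⟨hab, hcle⟩
  · -- strictly smaller lap count
    rcases cx_cases x0 u (G u) with h0 | ⟨h1, hbu, hxu⟩
    · rw [h0]; exact Or.inl (by omega)
    · rw [h1]
      rcases cx_cases x0 v (G v) with g0 | ⟨g1, hbv, hxv⟩
      · rw [g0]
        by_cases hlt : a + 1 < b + 0
        · exact Or.inl hlt
        refine Or.inr ⟨by omega, ?_⟩
        have hclev : cle x0 v (G v) := nocross g0 (Ne.symm hGv)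
        by_cases hveq : v = G u
        · rw [← hveq]; exact hclev
        by_cases hmem : btw u v (G u)
        · have h2 : btw v (G u) (G v) := gm hMono hVisG hGmax hmem
          have hsp := csplit x0 h2 (fun he => hveq he.symm) hGv
          rw [g0] at hsp
          rcases hsp with hl | ⟨_, hc⟩
          · omega
          · exact hc
        · have hs0 : sbtw (G u) v u := sbtw_iff_not_btw.2 hmem
          have hsp := csplit x0 hs0.btw hveq (Ne.symm hGu)
          rw [crossback0 hbu hxu (hGne u)] at hsp
          have hz : cx x0 (G u) v = 0 := by
            rcases hsp with hl | ⟨he, _⟩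
            · omega
            · exact he
          have hcl1 : cle x0 (G u) v := nocross hz (fun he => hveq he.symm)
          exact cle_trans hcl1 hclev
      · rw [g1]; exact Or.inl (by omega)
  · -- equal lap count
    rcases hcle with hs | he | hx
    · -- sbtw x0 u v
      have hux0 : u ≠ x0 := fun h' => sbtw_irrefl_left (h' ▸ hs)
      have hvx0 : v ≠ x0 := fun h' => sbtw_irrefl_left_right (h' ▸ hs)
      have huv : u ≠ v := fun h' => sbtw_irrefl_right (h' ▸ hs)
      have hcxuv : cx x0 u v = 0 := cle_cx_zero (Or.inl hs) huv
      rcases cx_cases x0 u (G u) with h0 | ⟨h1, hbu, hxu⟩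
      · rcases cx_cases x0 v (G v) with g0 | ⟨g1, hbv, hxv⟩
        · rw [h0, g0]
          refine Or.inr ⟨by omega, ?_⟩
          have hclev : cle x0 v (G v) := nocross g0 (Ne.symm hGv)
          by_cases hveq : v = G u
          · rw [← hveq]; exact hclev
          by_cases hmem : btw u v (G u)
          · have h2 : btw v (G u) (G v) := gm hMono hVisG hGmax hmem
            have hsp := csplit x0 h2 (fun he => hveq he.symm) hGv
            rw [g0] at hsp
            rcases hsp with hl | ⟨_, hc⟩
            · omega
            · exact hc
          · have hs0 : sbtw (G u) v u := sbtw_iff_not_btw.2 hmem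
            have hs1 : sbtw u (G u) v := hs0.cyclic_left.cyclic_left
            have hsp := csplit x0 hs1.btw hGu (Ne.symm huv)
            rw [h0, hcxuv] at hsp
            rcases hsp with hl | ⟨_, hc⟩
            · omega
            · exact cle_trans hc hclev
        · rw [h0, g1]; exact Or.inl (by omega)
      · rcases cx_cases x0 v (G v) with g0 | ⟨g1, hbv, hxv⟩
        · -- (1,0): impossible
          exfalso
          by_cases hmem : btw u v (G u)
          · by_cases hveq : v = G u
            · rw [← hveq] at h1
              omega
            · have h2 : btw v (G u) (G v) := gm hMono hVisG hGmax hmem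
              have h3 : btw u v x0 := (cle_btw (Or.inl hs)).cyclic_left
              have h4 : btw v x0 (G u) := l6 h3 hbu hux0
              have h5 : btw v x0 (G v) := lff h4 h2 hveq
              rw [cx_one h5 (Ne.symm hvx0)] at g0
              omega
          · have hs0 : sbtw (G u) v u := sbtw_iff_not_btw.2 hmem
            have hs1 : sbtw u (G u) v := hs0.cyclic_left.cyclic_left
            have hsp := csplit x0 hs1.btw hGu (Ne.symm huv)
            rw [h1, hcxuv] at hsp
            rcases hsp with hl | ⟨he, _⟩ <;> omega
        · -- (1,1)
          rw [h1, g1]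
          refine Or.inr ⟨by omega, ?_⟩
          have hveq : v ≠ G u := by
            intro he
            rw [← he] at h1
            omega
          by_cases hmem : btw u v (G u)
          · have h2 : btw v (G u) (G v) := gm hMono hVisG hGmax hmem
            have h3 : btw u v x0 := (cle_btw (Or.inl hs)).cyclic_left
            have h4 : btw v x0 (G u) := l6 h3 hbu hux0
            have hc1 : cx x0 v (G u) = 1 := cx_one h4 (Ne.symm hvx0)
            have hsp := csplit x0 h2 (fun he => hveq he.symm) hGv
            rw [hc1, g1] at hsp
            rcases hsp with hl | ⟨_, hc⟩
            · omega
            · exact hc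
          · exfalso
            have hs0 : sbtw (G u) v u := sbtw_iff_not_btw.2 hmem
            have hs1 : sbtw u (G u) v := hs0.cyclic_left.cyclic_left
            have hsp := csplit x0 hs1.btw hGu (Ne.symm huv)
            rw [h1, hcxuv] at hsp
            rcases hsp with hl | ⟨he, _⟩ <;> omega
    · -- u = v
      subst he
      rw [hab]
      exact lle_refl x0 _ _
    · -- u = x0
      subst hx
      rw [cx_x0_left]
      rcases cx_cases u v (G v) with g0 | ⟨g1, hbv, hxv⟩
      · rw [g0]
        refine Or.inr ⟨by omega, ?_⟩
        have hclev : cle u v (G v) := nocross g0 (Ne.symm hGv)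
        by_cases hveq : v = G u
        · rw [← hveq]; exact hclev
        by_cases hmem : btw u v (G u)
        · have h2 : btw v (G u) (G v) := gm hMono hVisG hGmax hmem
          have hsp := csplit u h2 (fun he => hveq he.symm) hGv
          rw [g0] at hsp
          rcases hsp with hl | ⟨_, hc⟩
          · omega
          · exact hc
        · have hs0 : sbtw (G u) v u := sbtw_iff_not_btw.2 hmem
          have hs1 : sbtw u (G u) v := hs0.cyclic_left.cyclic_left
          exact cle_trans (Or.inl hs1) hclev
      · rw [g1]; exact Or.inl (by omega)

end Greedy

lemma chaincov (w : ℕ → α) (m : ℕ) (hm : 0 < m) (hcl : w m = w 0) (x : α) :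
    ∃ t : Fin m, btw (w t.val) x (w (t.val + 1)) := by
  by_contra hx
  push_neg at hx
  have hstep : ∀ t, t < m → ¬ btw (w t) x (w (t+1)) := fun t ht => hx ⟨t, ht⟩
  have claim : ∀ t, t ≤ m → 0 < t → sbtw (w t) x (w 0) := by
    intro t
    induction t with
    | zero => omega
    | succ t ih =>
      intro htm _
      rcases Nat.eq_zero_or_pos t with h0 | hpos
      · subst h0
        exact sbtw_iff_not_btw.2 (hstep 0 hm)
      · have s1 : sbtw (w (t+1)) x (w t) := sbtw_iff_not_btw.2 (hstep t (by omega))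
        exact midtrans s1 (ih (by omega) hpos)
  have hfin := claim m le_rfl hm
  rw [hcl] at hfin
  exact sbtw_irrefl_left_right hfin

lemma mkpart {Vis : α → α → Prop} {G : α → α}
    (hMono : ∀ a b c d : α, arcCC a b ⊆ arcCC c d → Vis c d → Vis a b)
    (hVisG : ∀ x : α, Vis x (G x))
    (z : ℕ → α) (hz : ∀ t, z (t+1) = G (z t)) (m : ℕ) (hm : 0 < m)
    (hwr : btw (z (m-1)) (z 0) (z m)) (hne : z 0 ≠ z (m-1)) :
    IsPartition Vis (fun t : Fin m => z t.val) := by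
  constructor
  · intro t
    by_cases hlt : t.val + 1 < m
    · have hnv : (nextIdx t).val = t.val + 1 := Nat.mod_eq_of_lt hlt
      show Vis (z t.val) (z (nextIdx t).val)
      rw [hnv, hz]
      exact hVisG _
    · have htm : t.val < m := t.isLt
      have hl : t.val + 1 = m := by omega
      have hnv : (nextIdx t).val = 0 := by
        show (t.val + 1) % m = 0
        rw [hl, Nat.mod_self]
      have htv : t.val = m - 1 := by omega
      show Vis (z t.val) (z (nextIdx t).val)
      rw [hnv, htv]
      refine hMono _ _ (z (m-1)) (z m) ?_ ?_
      · intro w hw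
        exact lff hw hwr (Ne.symm hne)
      · have hzm : z m = G (z (m-1)) := by
          rw [← hz (m-1)]
          congr 1
          omega
        rw [hzm]
        exact hVisG _
  · apply Set.eq_univ_of_forall
    intro x
    obtain ⟨t, ht⟩ := chaincov (fun s => z (s % m)) m hm (by simp [Nat.mod_self]) x
    refine Set.mem_iUnion.2 ⟨t, ?_⟩
    have e1 : t.val % m = t.val := Nat.mod_eq_of_lt t.isLt
    rw [e1] at ht
    exact ht

lemma main {Vis : α → α → Prop} {G : α → α}
    (hMono : ∀ a b c d : α, arcCC a b ⊆ arcCC c d → Vis c d → Vis a b)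
    (hVisG : ∀ x : α, Vis x (G x))
    (hGmax : ∀ x y : α, Vis x y → btw x y (G x))
    (hGne : ∀ x : α, G x ≠ x)
    (z : ℕ → α) (hz : ∀ t, z (t+1) = G (z t))
    (q : ℕ) (hq2 : 2 ≤ q) (hqret : z q = z 0)
    (hqmin : ∀ m, 0 < m → m < q → z m ≠ z 0)
    {k : ℕ} (hk2 : 2 ≤ k) (y : Fin k → α) (hy : IsOptimalPartition Vis y) :
    btw (z (k-1)) (z 0) (z k) ∧ z 0 ≠ z (k-1) := by
  classical
  by_cases hEx : ∃ m, 0 < m ∧ m ≤ k ∧ btw (z (m-1)) (z 0) (z m) ∧ z 0 ≠ z (m-1)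
  · obtain ⟨m, hm0, hmk, hwr, hne⟩ := hEx
    have hp := mkpart hMono hVisG z hz m hm0 hwr hne
    have hkm : k ≤ m := hy.2 m _ hp
    have hmeq : m = k := le_antisymm hmk hkm
    subst hmeq
    exact ⟨hwr, hne⟩
  · exfalso
    push_neg at hEx
    have hzper : ∀ t, z (t + q) = z t := by
      intro t
      induction t with
      | zero => simpa using hqret
      | succ t ih =>
        have e : (t + 1) + q = (t + q) + 1 := by omega
        rw [e, hz, ih, hz]
    set c : ℕ → ℕ := fun t => cx (z 0) (z t) (z (t+1)) with hcdef
    set lam : ℕ → ℕ := fun t => ∑ u ∈ Finset.range t, c u with hlamdef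
    have lam_succ : ∀ t, lam (t+1) = lam t + c t := fun t => Finset.sum_range_succ c t
    have lam_mono : ∀ s t, s ≤ t → lam s ≤ lam t := by
      intro s t hst
      exact Finset.sum_le_sum_of_subset (Finset.range_subset_range.2 hst)
    have hc0 : ∀ t, t < k → c t = 0 := by
      intro t ht
      apply cx_zero
      rintro ⟨hb, hxne⟩
      exact hxne (hEx (t+1) (by omega) (by omega) hb)
    have lam_k : lam k = 0 := Finset.sum_eq_zero (fun u hu => hc0 u (Finset.mem_range.1 hu))
    have c_per : ∀ t, c (t + q) = c t := by
      intro t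
      show cx (z 0) (z (t+q)) (z (t+q+1)) = cx (z 0) (z t) (z (t+1))
      have e : t + q + 1 = (t+1) + q := by omega
      rw [hzper t, e, hzper (t+1)]
    have lam_zero : lam 0 = 0 := by rw [hlamdef]; simp
    have lam_add : ∀ t, lam (t + q) = lam t + lam q := by
      intro t
      induction t with
      | zero => rw [Nat.zero_add, lam_zero, Nat.zero_add]
      | succ t ih =>
        have e : t + 1 + q = (t + q) + 1 := by omega
        rw [e, lam_succ, c_per, ih, lam_succ]
        omega
    have lam_mul : ∀ N, lam (N * q) = N * lam q := by
      intro N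
      induction N with
      | zero => rw [Nat.zero_mul, lam_zero, Nat.zero_mul]
      | succ N ih =>
        have e : (N+1) * q = N*q + q := by ring
        rw [e, lam_add, ih]
        ring
    have hcq : c (q-1) = 1 := by
      apply cx_one
      · have e : z ((q-1)+1) = z q := by congr 1; omega
        rw [e, hqret]
        exact btw_rfl_right
      · intro hzz
        exact hqmin (q-1) (by omega) (by omega) hzz.symm
    have hL1 : 1 ≤ lam q := by
      have e1 : lam ((q-1)+1) = lam (q-1) + c (q-1) := lam_succ _
      have e2 : (q-1) + 1 = q := by omega
      rw [e2] at e1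
      rw [e1, hcq]
      omega
    have chainC : ∀ t, Lle (z 0) (lam (t+k)) (z (t+k)) (lam t + 1) (z t) := by
      intro t
      induction t with
      | zero =>
        refine Or.inl ?_
        have e : lam (0 + k) = 0 := by rw [Nat.zero_add]; exact lam_k
        rw [e]
        omega
      | succ t ih =>
        have hg := gmono hMono hVisG hGmax hGne (z 0) ih
        rw [← hz (t+k), ← hz t] at hg
        have e1 : t + 1 + k = (t + k) + 1 := by omega
        have e2 : lam ((t+k)+1) = lam (t+k) + c (t+k) := lam_succ _
        have e3 : lam (t+1) + 1 = lam t + 1 + c t := by rw [lam_succ]; omega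
        rw [e1, e2, e3]
        exact hg
    have lamkb : ∀ n, 1 ≤ n → lam (n * k) ≤ n - 1 := by
      intro n
      induction n with
      | zero => omega
      | succ n ih =>
        intro _
        rcases Nat.eq_zero_or_pos n with h0 | hpos
        · subst h0
          have e : (0+1) * k = k := by ring
          rw [e, lam_k]
        · have hf := lle_fst (chainC (n*k))
          have e : (n+1)*k = n*k + k := by ring
          rw [e]
          have hih := ih hpos
          omega
    have hk0 : 0 < k := by omega
    set Y : ℕ → α := fun t => y ⟨t % k, Nat.mod_lt t hk0⟩ with hYdef
    have Yper : ∀ t, Y (t + k) = Y t := by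
      intro t
      show y _ = y _
      congr 1
      exact Fin.ext (Nat.add_mod_right t k)
    have Yvis : ∀ t, Vis (Y t) (Y (t+1)) := by
      intro t
      have h := hy.1.1 ⟨t % k, Nat.mod_lt t hk0⟩
      have e : nextIdx (⟨t % k, Nat.mod_lt t hk0⟩ : Fin k)
          = (⟨(t+1) % k, Nat.mod_lt _ hk0⟩ : Fin k) := by
        apply Fin.ext
        show (t % k + 1) % k = (t+1) % k
        rw [Nat.add_mod t 1 k, Nat.mod_eq_of_lt (show 1 < k by omega)]
      rw [e] at h
      exact h
    have Yadj : ∀ t, Y (t+1) ≠ Y t := by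
      intro t he
      have hp1 : IsPartition Vis (fun _ : Fin 1 => Y t) := by
        constructor
        · intro _
          have hv := Yvis t
          rw [he] at hv
          exact hv
        · apply Set.eq_univ_of_forall
          intro x
          exact Set.mem_iUnion.2 ⟨0, btw_rfl_left_right⟩
      have := hy.2 1 _ hp1
      omega
    set cy : ℕ → ℕ := fun t => cx (z 0) (Y t) (Y (t+1)) with hcydef
    set mu : ℕ → ℕ := fun t => ∑ u ∈ Finset.range t, cy u with hmudef
    have mu_succ : ∀ t, mu (t+1) = mu t + cy t := fun t => Finset.sum_range_succ cy t
    have mu_mono : ∀ s t, s ≤ t → mu s ≤ mu t := by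
      intro s t hst
      exact Finset.sum_le_sum_of_subset (Finset.range_subset_range.2 hst)
    have cy_per : ∀ t, cy (t+k) = cy t := by
      intro t
      show cx (z 0) (Y (t+k)) (Y (t+k+1)) = cx (z 0) (Y t) (Y (t+1))
      have e : t + k + 1 = (t+1) + k := by omega
      rw [Yper t, e, Yper (t+1)]
    have mu_zero : mu 0 = 0 := by rw [hmudef]; simp
    have mu_add : ∀ t, mu (t + k) = mu t + mu k := by
      intro t
      induction t with
      | zero => rw [Nat.zero_add, mu_zero, Nat.zero_add]
      | succ t ih =>
        have e : t + 1 + k = (t + k) + 1 := by omega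
        rw [e, mu_succ, cy_per, ih, mu_succ]
        omega
    have mu_mul : ∀ N, mu (N * k) = N * mu k := by
      intro N
      induction N with
      | zero => rw [Nat.zero_mul, mu_zero, Nat.zero_mul]
      | succ N ih =>
        have e : (N+1) * k = N*k + k := by ring
        rw [e, mu_add, ih]
        ring
    have hW1 : 1 ≤ mu k := by
      by_contra hW
      have hWz : (∑ u ∈ Finset.range k, cy u) = 0 := by
        have : mu k = 0 := by omega
        exact this
      have hcy0 : ∀ t, t < k → cy t = 0 := by
        intro t ht
        exact Finset.sum_eq_zero_iff.1 hWz t (Finset.mem_range.2 ht)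
      have hchain : ∀ t, 1 ≤ t → t ≤ k → cle (z 0) (Y 1) (Y t) := by
        intro t
        induction t with
        | zero => omega
        | succ t ih =>
          intro _ htk
          rcases Nat.eq_zero_or_pos t with h0 | hpos
          · subst h0
            exact cle_refl _ _
          · exact cle_trans (ih (by omega) (by omega))
              (nocross (hcy0 t (by omega)) (Ne.symm (Yadj t)))
      have h1k : cle (z 0) (Y 1) (Y k) := hchain k (by omega) le_rfl
      have hYk : Y k = Y 0 := by
        have h := Yper 0
        rw [Nat.zero_add] at h
        exact h
      rw [hYk] at h1k
      have h01 : cle (z 0) (Y 0) (Y 1) := nocross (hcy0 0 hk0) (Ne.symm (Yadj 0))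
      exact Yadj 0 (cle_antisymm h01 h1k).symm
    have INV : ∀ t, Lle (z 0) (mu t) (Y t) (lam t + 1) (z t) := by
      intro t
      induction t with
      | zero =>
        refine Or.inl ?_
        rw [mu_zero]
        omega
      | succ t ih =>
        have hsp := csplit (z 0) (hGmax _ _ (Yvis t)) (Yadj t) (hGne (Y t))
        have hs2 := lle_add_left (mu t) hsp
        have hs3 := gmono hMono hVisG hGmax hGne (z 0) ih
        have hs4 := lle_trans hs2 hs3
        rw [← hz t] at hs4
        have e1 : mu (t+1) = mu t + cy t := mu_succ t
        have e2 : lam (t+1) + 1 = lam t + 1 + c t := by rw [lam_succ]; omega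
        rw [e1, e2]
        exact hs4
    have mu_le : ∀ t, mu t ≤ lam t + 1 := fun t => lle_fst (INV t)
    have hqLk : q ≤ lam q * k := by
      by_contra hqk
      have hq1 : lam q * k + 1 ≤ q := by omega
      have h1 : mu ((2*k) * q) ≤ lam ((2*k) * q) + 1 := mu_le _
      have h2 : lam ((2*k) * q) = (2*k) * lam q := lam_mul (2*k)
      have h3 : (2*(lam q * k + 1)) * k ≤ (2*k) * q := by
        calc (2*(lam q * k + 1)) * k = 2*k*(lam q * k + 1) := by ring
        _ ≤ 2*k*q := Nat.mul_le_mul_left _ hq1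
      have h4 : mu ((2*(lam q * k + 1)) * k) = (2*(lam q * k + 1)) * mu k := mu_mul _
      have h5 := mu_mono _ _ h3
      have h6 : 2*(lam q * k + 1) ≤ 2*(lam q * k + 1) * mu k :=
        Nat.le_mul_of_pos_right _ (by omega)
      have h7 : 2*(lam q * k + 1) ≤ (2*k) * lam q + 1 := by
        calc 2*(lam q * k + 1) ≤ 2*(lam q * k + 1) * mu k := h6
        _ = mu ((2*(lam q * k + 1)) * k) := h4.symm
        _ ≤ mu ((2*k) * q) := h5
        _ ≤ lam ((2*k) * q) + 1 := h1
        _ = (2*k) * lam q + 1 := by rw [h2]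
      have h8 : (2*k) * lam q = 2*(lam q * k) := by ring
      omega
    have hlam1 : lam (lam q * k) ≤ lam q - 1 := lamkb (lam q) hL1
    have hlam2 : lam q ≤ lam (lam q * k) := lam_mono _ _ hqLk
    omega

end PIO

/--
Periodicity implies optimality.  If a greedy sequence `xs` on the
circular boundary of a non-star-shaped simple polygon contains two equal points
`xs i = xs j` with `i < j`, then the `k*` consecutive points starting at `xs j` form an
optimal partition of the boundary, where `k*` is the minimum number of visible intervals
partitioning the boundary.
-/
theorem periodicity_implies_optimal {α : Type*} [CircularOrder α]
    (Vis : α → α → Prop) (G : α → α)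
    (hMono : ∀ a b c d : α, arcCC a b ⊆ arcCC c d → Vis c d → Vis a b)
    (hVisG : ∀ x : α, Vis x (G x))
    (hGmax : ∀ x y : α, Vis x y → Btw.btw x y (G x))
    (hGne : ∀ x : α, G x ≠ x)
    (xs : ℕ → α) (hstep : ∀ n : ℕ, xs (n + 1) = G (xs n))
    (i j : ℕ) (hij : i < j) (heq : xs i = xs j)
    {kstar : ℕ} (y : Fin kstar → α) (hy : IsOptimalPartition Vis y) :
    IsOptimalPartition Vis (fun t : Fin kstar => xs (j + t.val)) := by
  classical
  rcases Nat.eq_zero_or_pos kstar with hk0 | hkpos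
  · subst hk0
    refine ⟨⟨fun t => t.elim0, ?_⟩, hy.2⟩
    have h := hy.1.2
    rw [Set.iUnion_of_empty] at h ⊢
    exact h
  rcases eq_or_lt_of_le (show 1 ≤ kstar by omega) with hk1 | hk2
  · -- kstar = 1
    have hk1' : kstar = 1 := hk1.symm
    subst hk1'
    refine ⟨⟨?_, ?_⟩, hy.2⟩
    · intro t
      have h0 : ∀ s : Fin 1, (s : ℕ) = 0 := fun s => by omega
      show Vis (xs (j + (t : ℕ))) (xs (j + ((nextIdx t) : ℕ)))
      rw [h0 t, h0 (nextIdx t)]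
      refine hMono _ _ (y 0) (y (nextIdx 0)) ?_ (hy.1.1 0)
      intro w _
      show btw (y 0) w (y (nextIdx 0))
      have he : nextIdx (0 : Fin 1) = 0 := by
        apply Fin.ext
        show (0 + 1) % 1 = 0
        omega
      rw [he]
      exact btw_rfl_left_right
    · apply Set.eq_univ_of_forall
      intro x
      refine Set.mem_iUnion.2 ⟨0, ?_⟩
      have h0 : ∀ s : Fin 1, (s : ℕ) = 0 := fun s => by omega
      show btw (xs (j + ((0 : Fin 1) : ℕ))) x (xs (j + ((nextIdx 0) : ℕ)))
      rw [h0 (nextIdx 0), h0 0]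
      exact btw_rfl_left_right
  · -- 2 ≤ kstar
    have hk2' : 2 ≤ kstar := hk2
    let z : ℕ → α := fun t => xs (j + t)
    have hz : ∀ t, z (t+1) = G (z t) := by
      intro t
      show xs (j + (t+1)) = G (xs (j + t))
      have e : j + (t+1) = (j + t) + 1 := by omega
      rw [e, hstep]
    have hshift : ∀ m, xs (i + m) = xs (j + m) := by
      intro m
      induction m with
      | zero => simpa using heq
      | succ m ih =>
        have e1 : i + (m+1) = (i+m)+1 := by omega
        have e2 : j + (m+1) = (j+m)+1 := by omega
        rw [e1, e2, hstep, hstep, ih]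
    have hper : z (j - i) = z 0 := by
      show xs (j + (j - i)) = xs (j + 0)
      rw [← hshift (j-i)]
      congr 1
      omega
    have hPex : ∃ m, 0 < m ∧ z m = z 0 := ⟨j - i, by omega, hper⟩
    have hqspec : 0 < Nat.find hPex ∧ z (Nat.find hPex) = z 0 := Nat.find_spec hPex
    have hqmin : ∀ m, 0 < m → m < Nat.find hPex → z m ≠ z 0 := by
      intro m h1 h2 h3
      exact Nat.find_min hPex h2 ⟨h1, h3⟩
    have hq2 : 2 ≤ Nat.find hPex := by
      rcases Nat.lt_or_ge (Nat.find hPex) 2 with h | h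
      · exfalso
        have hq1 : Nat.find hPex = 1 := by omega
        have hh := hqspec.2
        rw [hq1, hz 0] at hh
        exact hGne (z 0) hh
      · exact h
    obtain ⟨hwr, hne⟩ := PIO.main hMono hVisG hGmax hGne z hz (Nat.find hPex) hq2
      hqspec.2 hqmin hk2' y hy
    exact ⟨PIO.mkpart hMono hVisG z hz kstar (by omega) hwr hne, hy.2⟩
end

section
/- Bit-complexity of segment intersection: let V, W, B, C, D be points with rational coordinates each representable in N bits, let s = s^n/s^d be a rational scalar, and let A = sV + (1−s)W. If the lines through A,B and through C,D are non-parallel, then their intersection point E can be written as E = tC + (1−t)D for a rational t = t^n/t^d whose numerator and denominator have bit complexity at most max{⟨s^n⟩, ⟨s^d⟩} + O(N). -/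
/-- The bit complexity of an integer `v`: `1 + ⌈log₂ (|v| + 1)⌉`, the number of bits
needed to encode `v` including a sign bit. -/
def bitc (v : ℤ) : ℕ := 1 + Nat.clog 2 (v.natAbs + 1)

/-- The bit complexity of a rational: the sum of the complexities of its numerator and
denominator. -/
def qbitc (q : ℚ) : ℕ := bitc q.num + bitc (q.den : ℤ)

/-- The bit complexity of a planar point with rational coordinates: the sum over the
coordinates. -/
def pbitc (p : ℚ × ℚ) : ℕ := qbitc p.1 + qbitc p.2

lemma natAbs_lt_pow_bitc (v : ℤ) : v.natAbs < 2 ^ bitc v := by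
  have h1 : v.natAbs + 1 ≤ 2 ^ Nat.clog 2 (v.natAbs + 1) := Nat.le_pow_clog one_lt_two _
  have h2 : (2:ℕ) ^ Nat.clog 2 (v.natAbs + 1) ≤ 2 ^ bitc v :=
    Nat.pow_le_pow_right (by norm_num) (by simp [bitc])
  omega

lemma bitc_le_of_natAbs_le {v : ℤ} {k : ℕ} (h : v.natAbs ≤ 2 ^ k) : bitc v ≤ k + 2 := by
  have h1 : v.natAbs + 1 ≤ 2 ^ (k+1) := by
    have : (2:ℕ)^k + 1 ≤ 2^(k+1) := by
      have := Nat.one_le_two_pow (n := k); rw [pow_succ]; omega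
    omega
  have h2 := (Nat.clog_le_iff_le_pow one_lt_two).mpr h1
  simp only [bitc]; omega

lemma qden_le {q : ℚ} {n : ℕ} (h : qbitc q ≤ n) : q.den ≤ 2 ^ n := by
  have h1 := natAbs_lt_pow_bitc (q.den : ℤ)
  have h2 : (2:ℕ)^(bitc (q.den:ℤ)) ≤ 2^n :=
    Nat.pow_le_pow_right (by norm_num) (le_trans (Nat.le_add_left _ _) h)
  simp only [Int.natAbs_natCast] at h1
  omega

lemma int_cast_abs_le (v : ℤ) : |(v:ℚ)| ≤ 2 ^ bitc v := by
  have h1 : (v.natAbs : ℚ) ≤ (2:ℚ) ^ bitc v := by exact_mod_cast (natAbs_lt_pow_bitc v).le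
  rw [Nat.cast_natAbs, Int.cast_abs] at h1
  exact h1

lemma qabs_le {q : ℚ} {n : ℕ} (h : qbitc q ≤ n) : |q| ≤ (2:ℚ) ^ n := by
  have h1 : |(q.num : ℚ)| ≤ (2:ℚ) ^ n := by
    refine (int_cast_abs_le q.num).trans ?_
    exact pow_le_pow_right₀ (by norm_num) (le_trans (Nat.le_add_right _ _) h)
  have h2 : |q| ≤ |(q.num : ℚ)| := by
    conv_lhs => rw [← Rat.num_div_den q]
    rw [abs_div]
    apply div_le_self (abs_nonneg _)
    rw [abs_of_nonneg (by positivity)]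
    exact_mod_cast q.pos
  exact h2.trans h1

lemma den_add_le (a b : ℚ) : (a + b).den ≤ a.den * b.den :=
  Nat.le_of_dvd (by positivity) (Rat.add_den_dvd a b)

lemma den_sub_le (a b : ℚ) : (a - b).den ≤ a.den * b.den := by
  rw [sub_eq_add_neg]
  simpa [Rat.den_neg_eq_den] using den_add_le a (-b)

lemma den_mul_le (a b : ℚ) : (a * b).den ≤ a.den * b.den :=
  Nat.le_of_dvd (by positivity) (Rat.mul_den_dvd a b)

lemma cross_den_le (x y z w a b c d : ℚ) :
    ((x-y)*(z-w) - (a-b)*(c-d)).den ≤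
      x.den*y.den*(z.den*w.den)*(a.den*b.den*(c.den*d.den)) := by
  calc ((x-y)*(z-w) - (a-b)*(c-d)).den
      ≤ ((x-y)*(z-w)).den * ((a-b)*(c-d)).den := den_sub_le _ _
    _ ≤ ((x-y).den*(z-w).den) * ((a-b).den*(c-d).den) :=
        Nat.mul_le_mul (den_mul_le _ _) (den_mul_le _ _)
    _ ≤ _ := Nat.mul_le_mul (Nat.mul_le_mul (den_sub_le _ _) (den_sub_le _ _))
        (Nat.mul_le_mul (den_sub_le _ _) (den_sub_le _ _))

lemma cross_abs_le {x y z w a b c d β : ℚ} (hβ : 0 ≤ β)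
    (hx : |x| ≤ β) (hy : |y| ≤ β) (hz : |z| ≤ β) (hw : |w| ≤ β)
    (ha : |a| ≤ β) (hb : |b| ≤ β) (hc : |c| ≤ β) (hd : |d| ≤ β) :
    |(x-y)*(z-w) - (a-b)*(c-d)| ≤ 8*β^2 := by
  have h1 : |x - y| ≤ 2*β := (abs_sub x y).trans (by linarith)
  have h2 : |z - w| ≤ 2*β := (abs_sub z w).trans (by linarith)
  have h3 : |a - b| ≤ 2*β := (abs_sub a b).trans (by linarith)
  have h4 : |c - d| ≤ 2*β := (abs_sub c d).trans (by linarith)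
  calc |(x-y)*(z-w) - (a-b)*(c-d)|
      ≤ |(x-y)*(z-w)| + |(a-b)*(c-d)| := abs_sub _ _
    _ = |x - y| * |z - w| + |a - b| * |c - d| := by rw [abs_mul, abs_mul]
    _ ≤ (2*β)*(2*β) + (2*β)*(2*β) := by
        gcongr
    _ = 8*β^2 := by ring

lemma natAbs_num_eq (q : ℚ) : (q.num.natAbs : ℚ) = |q| * q.den := by
  have hd : ((q.den:ℚ)) ≠ 0 := by positivity
  have h1 : (q.num : ℚ) = q * q.den := (div_eq_iff hd).mp (Rat.num_div_den q)
  rw [Nat.cast_natAbs, Int.cast_abs, h1, abs_mul, abs_of_nonneg (by positivity : (0:ℚ) ≤ (q.den:ℚ))]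

set_option maxHeartbeats 2000000 in
/--
**Bit complexity of segment intersection.** There is a universal constant
`c` such that for all `N` and all points `V, W, B, C, D` with rational coordinates each
representable in `N` bits, and every rational scalar `s = sⁿ/sᵈ`, setting
`A = s•V + (1−s)•W`: if the lines through `A, B` and through `C, D` are non-parallel,
then their intersection point `E` (a point on the line through `C, D` which also lies on
the line through `A, B`) can be written `E = t•C + (1−t)•D` for a rational `t = tⁿ/tᵈ`
whose numerator and denominator have bit complexity at most
`max {⟨sⁿ⟩, ⟨sᵈ⟩} + O(N)`.
-/
theorem segment_intersection_bit_complexity :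
    ∃ c : ℕ, ∀ (N : ℕ) (V W B C D : ℚ × ℚ) (sn sd : ℤ),
      pbitc V ≤ N → pbitc W ≤ N → pbitc B ≤ N → pbitc C ≤ N → pbitc D ≤ N →
      sd ≠ 0 →
      ∀ s : ℚ, s = (sn : ℚ) / (sd : ℚ) →
      ∀ A : ℚ × ℚ, A = s • V + (1 - s) • W →
      (B.1 - A.1) * (D.2 - C.2) ≠ (B.2 - A.2) * (D.1 - C.1) →
      ∃ (tn td : ℤ) (t : ℚ), td ≠ 0 ∧ t = (tn : ℚ) / (td : ℚ) ∧
        (∃ u : ℚ, t • C + (1 - t) • D = u • A + (1 - u) • B) ∧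
        bitc tn ≤ max (bitc sn) (bitc sd) + c * N ∧
        bitc td ≤ max (bitc sn) (bitc sd) + c * N := by
  refine ⟨100, ?_⟩
  intro N V W B C D sn sd hV hW hB hC hD hsd s hs A hA hne
  have hsd' : ((sd:ℚ)) ≠ 0 := Int.cast_ne_zero.mpr hsd
  have hN4 : 4 ≤ N := le_trans (by unfold pbitc qbitc bitc; omega) hV
  -- coordinate bounds
  have hq : ∀ P : ℚ × ℚ, pbitc P ≤ N →
      |P.1| ≤ (2:ℚ)^N ∧ |P.2| ≤ (2:ℚ)^N ∧ P.1.den ≤ 2^N ∧ P.2.den ≤ 2^N := by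
    intro P hP
    have h1 : qbitc P.1 ≤ N := le_trans (Nat.le_add_right _ _) hP
    have h2 : qbitc P.2 ≤ N := le_trans (Nat.le_add_left _ _) hP
    exact ⟨qabs_le h1, qabs_le h2, qden_le h1, qden_le h2⟩
  obtain ⟨hV1, hV2, hV1d, hV2d⟩ := hq V hV
  obtain ⟨hW1, hW2, hW1d, hW2d⟩ := hq W hW
  obtain ⟨hB1, hB2, hB1d, hB2d⟩ := hq B hB
  obtain ⟨hC1, hC2, hC1d, hC2d⟩ := hq C hC
  obtain ⟨hD1, hD2, hD1d, hD2d⟩ := hq D hD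
  -- scalar bounds
  have hsnM : |(sn:ℚ)| ≤ (2:ℚ) ^ max (bitc sn) (bitc sd) :=
    (int_cast_abs_le sn).trans (pow_le_pow_right₀ one_le_two (le_max_left _ _))
  have hsdM : |(sd:ℚ)| ≤ (2:ℚ) ^ max (bitc sn) (bitc sd) :=
    (int_cast_abs_le sd).trans (pow_le_pow_right₀ one_le_two (le_max_right _ _))
  -- the cleared-denominator numerator and denominator, linear in (sn, sd)
  set X : ℚ := (D.1-W.1)*(B.2-W.2) - (D.2-W.2)*(B.1-W.1) with hXdef
  set Y1 : ℚ := (V.1-W.1)*(B.2-W.2) - (V.2-W.2)*(B.1-W.1) with hY1def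
  set Y2 : ℚ := (D.1-W.1)*(V.2-W.2) - (D.2-W.2)*(V.1-W.1) with hY2def
  set Xq : ℚ := (D.1-C.1)*(B.2-W.2) - (D.2-C.2)*(B.1-W.1) with hXqdef
  set Yq : ℚ := (D.1-C.1)*(V.2-W.2) - (D.2-C.2)*(V.1-W.1) with hYqdef
  set Pq : ℚ := (sd:ℚ) * X - (sn:ℚ) * (Y1 + Y2) with hPqdef
  set Qq : ℚ := (sd:ℚ) * Xq - (sn:ℚ) * Yq with hQqdef
  set num : ℚ := (D.1-A.1)*(B.2-A.2) - (D.2-A.2)*(B.1-A.1) with hnumdef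
  set den : ℚ := (D.1-C.1)*(B.2-A.2) - (D.2-C.2)*(B.1-A.1) with hdendef
  have hA1 : A.1 = s * V.1 + (1-s) * W.1 := by
    rw [hA]; simp [Prod.fst_add, Prod.smul_fst, smul_eq_mul]
  have hA2 : A.2 = s * V.2 + (1-s) * W.2 := by
    rw [hA]; simp [Prod.snd_add, Prod.smul_snd, smul_eq_mul]
  -- key algebraic identities
  have hid1 : Pq = (sd:ℚ) * num := by
    rw [hPqdef, hnumdef, hXdef, hY1def, hY2def, hA1, hA2, hs]
    field_simp
    ring
  have hid2 : Qq = (sd:ℚ) * den := by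
    rw [hQqdef, hdendef, hXqdef, hYqdef, hA1, hA2, hs]
    field_simp
    ring
  have hden0 : den ≠ 0 := by
    rw [hdendef]
    intro h
    exact hne (by linear_combination -h)
  have hQq0 : Qq ≠ 0 := by rw [hid2]; exact mul_ne_zero hsd' hden0
  have hQnum0 : Qq.num ≠ 0 := Rat.num_ne_zero.mpr hQq0
  have hPden0 : ((Pq.den:ℚ)) ≠ 0 := by positivity
  have hQden0 : ((Qq.den:ℚ)) ≠ 0 := by positivity
  refine ⟨Pq.num * (Qq.den:ℤ), Qq.num * (Pq.den:ℤ), _, ?_, rfl, ?_, ?_, ?_⟩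
  · exact mul_ne_zero hQnum0 (by exact_mod_cast Pq.den_nz)
  -- the intersection point lies on the line through A and B
  · have hPnum : (Pq.num : ℚ) = Pq * Pq.den := (div_eq_iff hPden0).mp (Rat.num_div_den Pq)
    have hQnum : (Qq.num : ℚ) = Qq * Qq.den := (div_eq_iff hQden0).mp (Rat.num_div_den Qq)
    have htdQ : ((Qq.num * (Pq.den:ℤ) : ℤ) : ℚ) ≠ 0 := by
      exact_mod_cast mul_ne_zero hQnum0 (by exact_mod_cast Pq.den_nz)
    have ht2 : ((Pq.num * (Qq.den:ℤ) : ℤ) : ℚ) / ((Qq.num * (Pq.den:ℤ) : ℤ) : ℚ) = num / den := by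
      rw [div_eq_div_iff htdQ hden0]
      push_cast
      linear_combination ((Qq.den:ℚ) * den) * hPnum - (num * (Pq.den:ℚ)) * hQnum +
        ((Pq.den:ℚ) * (Qq.den:ℚ) * den) * hid1 - (num * (Pq.den:ℚ) * (Qq.den:ℚ)) * hid2
    rw [ht2]
    refine ⟨1 - ((D.1-C.1)*(D.2-A.2) - (D.1-A.1)*(D.2-C.2))/den, ?_⟩
    have hts : num / den * den = num := div_mul_cancel₀ _ hden0
    have hKs : ((D.1-C.1)*(D.2-A.2) - (D.1-A.1)*(D.2-C.2))/den * den
        = (D.1-C.1)*(D.2-A.2) - (D.1-A.1)*(D.2-C.2) := div_mul_cancel₀ _ hden0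
    apply Prod.ext
    · simp only [Prod.fst_add, Prod.smul_fst, smul_eq_mul]
      apply mul_right_cancel₀ hden0
      linear_combination (C.1 - D.1) * hts + (A.1 - B.1) * hKs
    · simp only [Prod.snd_add, Prod.smul_snd, smul_eq_mul]
      apply mul_right_cancel₀ hden0
      linear_combination (C.2 - D.2) * hts + (A.2 - B.2) * hKs
  -- bit-complexity bounds
  all_goals
    have hbeta0 : (0:ℚ) ≤ (2:ℚ)^N := by positivity
    -- absolute value bounds
    have hXabs : |X| ≤ 8*((2:ℚ)^N)^2 := by
      rw [hXdef]; exact cross_abs_le hbeta0 hD1 hW1 hB2 hW2 hD2 hW2 hB1 hW1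
    have hY1abs : |Y1| ≤ 8*((2:ℚ)^N)^2 := by
      rw [hY1def]; exact cross_abs_le hbeta0 hV1 hW1 hB2 hW2 hV2 hW2 hB1 hW1
    have hY2abs : |Y2| ≤ 8*((2:ℚ)^N)^2 := by
      rw [hY2def]; exact cross_abs_le hbeta0 hD1 hW1 hV2 hW2 hD2 hW2 hV1 hW1
    have hXqabs : |Xq| ≤ 8*((2:ℚ)^N)^2 := by
      rw [hXqdef]; exact cross_abs_le hbeta0 hD1 hC1 hB2 hW2 hD2 hC2 hB1 hW1
    have hYqabs : |Yq| ≤ 8*((2:ℚ)^N)^2 := by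
      rw [hYqdef]; exact cross_abs_le hbeta0 hD1 hC1 hV2 hW2 hD2 hC2 hV1 hW1
    have hposMN : (0:ℚ) ≤ (2:ℚ)^(max (bitc sn) (bitc sd)) * ((2:ℚ)^N)^2 := by positivity
    have hPabs : |Pq| ≤ 24 * ((2:ℚ)^(max (bitc sn) (bitc sd)) * ((2:ℚ)^N)^2) := by
      rw [hPqdef]
      calc |(sd:ℚ) * X - (sn:ℚ) * (Y1+Y2)| ≤ |(sd:ℚ)| * |X| + |(sn:ℚ)| * |Y1+Y2| := by
            refine (abs_sub _ _).trans ?_; rw [abs_mul, abs_mul]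
        _ ≤ (2:ℚ)^(max (bitc sn) (bitc sd)) * (8*((2:ℚ)^N)^2)
              + (2:ℚ)^(max (bitc sn) (bitc sd)) * (8*((2:ℚ)^N)^2 + 8*((2:ℚ)^N)^2) := by
            have hY : |Y1 + Y2| ≤ 8*((2:ℚ)^N)^2 + 8*((2:ℚ)^N)^2 :=
              (abs_add_le _ _).trans (add_le_add hY1abs hY2abs)
            gcongr
        _ = 24 * ((2:ℚ)^(max (bitc sn) (bitc sd)) * ((2:ℚ)^N)^2) := by ring
    have hQabs : |Qq| ≤ 24 * ((2:ℚ)^(max (bitc sn) (bitc sd)) * ((2:ℚ)^N)^2) := by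
      rw [hQqdef]
      calc |(sd:ℚ) * Xq - (sn:ℚ) * Yq| ≤ |(sd:ℚ)| * |Xq| + |(sn:ℚ)| * |Yq| := by
            refine (abs_sub _ _).trans ?_; rw [abs_mul, abs_mul]
        _ ≤ (2:ℚ)^(max (bitc sn) (bitc sd)) * (8*((2:ℚ)^N)^2)
              + (2:ℚ)^(max (bitc sn) (bitc sd)) * (8*((2:ℚ)^N)^2) := by gcongr
        _ = 16 * ((2:ℚ)^(max (bitc sn) (bitc sd)) * ((2:ℚ)^N)^2) := by ring
        _ ≤ 24 * ((2:ℚ)^(max (bitc sn) (bitc sd)) * ((2:ℚ)^N)^2) := by linarith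
    -- denominator bounds
    have hone : 1 ≤ (2:ℕ)^N := Nat.one_le_two_pow
    have hXden : X.den ≤ ((2:ℕ)^N)^8 := by
      rw [hXdef]
      refine (cross_den_le _ _ _ _ _ _ _ _).trans ?_
      calc D.1.den*W.1.den*(B.2.den*W.2.den)*(D.2.den*W.2.den*(B.1.den*W.1.den))
          ≤ 2^N*2^N*(2^N*2^N)*(2^N*2^N*(2^N*2^N)) := by gcongr
        _ = ((2:ℕ)^N)^8 := by ring
    have hY1den : Y1.den ≤ ((2:ℕ)^N)^8 := by
      rw [hY1def]
      refine (cross_den_le _ _ _ _ _ _ _ _).trans ?_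
      calc V.1.den*W.1.den*(B.2.den*W.2.den)*(V.2.den*W.2.den*(B.1.den*W.1.den))
          ≤ 2^N*2^N*(2^N*2^N)*(2^N*2^N*(2^N*2^N)) := by gcongr
        _ = ((2:ℕ)^N)^8 := by ring
    have hY2den : Y2.den ≤ ((2:ℕ)^N)^8 := by
      rw [hY2def]
      refine (cross_den_le _ _ _ _ _ _ _ _).trans ?_
      calc D.1.den*W.1.den*(V.2.den*W.2.den)*(D.2.den*W.2.den*(V.1.den*W.1.den))
          ≤ 2^N*2^N*(2^N*2^N)*(2^N*2^N*(2^N*2^N)) := by gcongr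
        _ = ((2:ℕ)^N)^8 := by ring
    have hXqden : Xq.den ≤ ((2:ℕ)^N)^8 := by
      rw [hXqdef]
      refine (cross_den_le _ _ _ _ _ _ _ _).trans ?_
      calc D.1.den*C.1.den*(B.2.den*W.2.den)*(D.2.den*C.2.den*(B.1.den*W.1.den))
          ≤ 2^N*2^N*(2^N*2^N)*(2^N*2^N*(2^N*2^N)) := by gcongr
        _ = ((2:ℕ)^N)^8 := by ring
    have hYqden : Yq.den ≤ ((2:ℕ)^N)^8 := by
      rw [hYqdef]
      refine (cross_den_le _ _ _ _ _ _ _ _).trans ?_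
      calc D.1.den*C.1.den*(V.2.den*W.2.den)*(D.2.den*C.2.den*(V.1.den*W.1.den))
          ≤ 2^N*2^N*(2^N*2^N)*(2^N*2^N*(2^N*2^N)) := by gcongr
        _ = ((2:ℕ)^N)^8 := by ring
    have hPden : Pq.den ≤ ((2:ℕ)^N)^24 := by
      rw [hPqdef]
      calc ((sd:ℚ) * X - (sn:ℚ)*(Y1+Y2)).den ≤ ((sd:ℚ)*X).den * ((sn:ℚ)*(Y1+Y2)).den :=
            den_sub_le _ _
        _ ≤ (((sd:ℚ)).den * X.den) * (((sn:ℚ)).den * (Y1+Y2).den) :=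
            Nat.mul_le_mul (den_mul_le _ _) (den_mul_le _ _)
        _ = X.den * (Y1+Y2).den := by rw [Rat.den_intCast, Rat.den_intCast, one_mul, one_mul]
        _ ≤ ((2:ℕ)^N)^8 * (((2:ℕ)^N)^8 * ((2:ℕ)^N)^8) :=
            Nat.mul_le_mul hXden ((den_add_le _ _).trans (Nat.mul_le_mul hY1den hY2den))
        _ = ((2:ℕ)^N)^24 := by ring
    have hQden : Qq.den ≤ ((2:ℕ)^N)^24 := by
      rw [hQqdef]
      calc ((sd:ℚ) * Xq - (sn:ℚ)*Yq).den ≤ ((sd:ℚ)*Xq).den * ((sn:ℚ)*Yq).den :=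
            den_sub_le _ _
        _ ≤ (((sd:ℚ)).den * Xq.den) * (((sn:ℚ)).den * Yq.den) :=
            Nat.mul_le_mul (den_mul_le _ _) (den_mul_le _ _)
        _ = Xq.den * Yq.den := by rw [Rat.den_intCast, Rat.den_intCast, one_mul, one_mul]
        _ ≤ ((2:ℕ)^N)^8 * ((2:ℕ)^N)^8 := Nat.mul_le_mul hXqden hYqden
        _ = ((2:ℕ)^N)^16 := by ring
        _ ≤ ((2:ℕ)^N)^24 := Nat.pow_le_pow_right hone (by norm_num)
    have hPdenQ : ((Pq.den:ℚ)) ≤ ((2:ℚ)^N)^24 := by exact_mod_cast Nat.cast_le.mpr hPden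
    have hQdenQ : ((Qq.den:ℚ)) ≤ ((2:ℚ)^N)^24 := by exact_mod_cast Nat.cast_le.mpr hQden
    have hPnumAbs : (Pq.num.natAbs : ℚ) ≤
        24 * ((2:ℚ)^(max (bitc sn) (bitc sd)) * ((2:ℚ)^N)^2) * ((2:ℚ)^N)^24 := by
      rw [natAbs_num_eq]
      exact mul_le_mul hPabs hPdenQ (by positivity) (by positivity)
    have hQnumAbs : (Qq.num.natAbs : ℚ) ≤
        24 * ((2:ℚ)^(max (bitc sn) (bitc sd)) * ((2:ℚ)^N)^2) * ((2:ℚ)^N)^24 := by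
      rw [natAbs_num_eq]
      exact mul_le_mul hQabs hQdenQ (by positivity) (by positivity)
    have h24 : (24:ℚ) ≤ ((2:ℚ)^N)^2 := by
      have h16 : (2:ℚ)^4 ≤ (2:ℚ)^N := pow_le_pow_right₀ one_le_two hN4
      nlinarith [hbeta0, h16]
    have hfin : ∀ a : ℤ, ∀ b : ℕ,
        (a.natAbs : ℚ) ≤ 24 * ((2:ℚ)^(max (bitc sn) (bitc sd)) * ((2:ℚ)^N)^2) * ((2:ℚ)^N)^24 →
        ((b:ℚ)) ≤ ((2:ℚ)^N)^24 →
        bitc (a * (b:ℤ)) ≤ max (bitc sn) (bitc sd) + 100 * N := by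
      intro a b ha hb
      have h1 : ((a * (b:ℤ)).natAbs : ℚ) ≤
          (2:ℚ)^(max (bitc sn) (bitc sd)) * ((2:ℚ)^N)^52 := by
        calc ((a * (b:ℤ)).natAbs : ℚ) = (a.natAbs : ℚ) * (b:ℚ) := by
              rw [Int.natAbs_mul, Int.natAbs_natCast]; push_cast; ring
          _ ≤ (24 * ((2:ℚ)^(max (bitc sn) (bitc sd)) * ((2:ℚ)^N)^2) * ((2:ℚ)^N)^24)
                * ((2:ℚ)^N)^24 := by
              refine mul_le_mul ha hb (by positivity) ?_
              positivity
          _ = 24 * ((2:ℚ)^(max (bitc sn) (bitc sd)) * ((2:ℚ)^N)^50) := by ring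
          _ ≤ ((2:ℚ)^N)^2 * ((2:ℚ)^(max (bitc sn) (bitc sd)) * ((2:ℚ)^N)^50) := by
              have : (0:ℚ) ≤ (2:ℚ)^(max (bitc sn) (bitc sd)) * ((2:ℚ)^N)^50 := by positivity
              exact mul_le_mul_of_nonneg_right h24 this
          _ = (2:ℚ)^(max (bitc sn) (bitc sd)) * ((2:ℚ)^N)^52 := by ring
      have h2 : (a * (b:ℤ)).natAbs ≤ 2 ^ (max (bitc sn) (bitc sd) + 52 * N) := by
        have hcast : (((2:ℕ) ^ (max (bitc sn) (bitc sd) + 52 * N) : ℕ) : ℚ)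
            = (2:ℚ)^(max (bitc sn) (bitc sd)) * ((2:ℚ)^N)^52 := by
          push_cast
          rw [pow_add, ← pow_mul]
          ring
        exact_mod_cast h1.trans_eq hcast.symm
      have h3 := bitc_le_of_natAbs_le h2
      omega
  · exact hfin Pq.num Qq.den hPnumAbs hQdenQ
  · exact hfin Qq.num Pq.den hQnumAbs hPdenQ
end
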